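/- arXiv:1902.03794 — 8 statements merged into one kernel-verified Lean document; each statement's English description precedes it below -/
import Mathlib

section
/- Let M = ([n], I) be a matroid with set of bases B, and let A, B ∈ B. Then there exists a bijection β : A → B such that for all a ∈ A, (A \ {a}) ∪ {β(a)} ∈ B, and β is the identity on A ∩ B. -/
/-- A matroid on the ground set `[n]`, given by its independent sets. -/
structure FinMatroid (n : ℕ) where
  Indep : Finset (Fin n) → Prop
  empty_indep : Indep ∅
  indep_subset : ∀ ⦃A B : Finset (Fin n)⦄, Indep A → B ⊆ A → Indep B
  exchange : ∀ ⦃A B : Finset (Fin n)⦄, Indep A → Indep B → B.card < A.card →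
    ∃ x ∈ A \ B, Indep (insert x B)

/-- A basis is a maximal independent set. -/
def FinMatroid.IsBasis {n : ℕ} (M : FinMatroid n) (A : Finset (Fin n)) : Prop :=
  M.Indep A ∧ ∀ B : Finset (Fin n), M.Indep B → A ⊆ B → A = B

/-!
Induction on `|A \ B|`. For `a ∈ A \ B`, symmetric exchange gives `b ∈ B \ A` such that both
`A - a + b` and `B' = B - b + a` are bases. Since `B'` is one step closer to `A`, a bijection
`A → B'` fixing `A ∩ B'` exists by induction, and composing it with the transposition `(a b)`
gives the required bijection `A → B`. Symmetric exchange holds because the fundamental circuit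
of `a` in `B` and the fundamental cocircuit of `a` in `A` both contain `a`, and a circuit and
a cocircuit never meet in exactly one element.
-/

open Set

namespace Matroid

variable {α : Type*} {M : Matroid α} {A B : Set α} {a b e f : α}

theorem IsBase.exchange_isBase_of_mem_fundCircuit (hB : M.IsBase B) (heE : e ∈ M.E)
    (heB : e ∉ B) (hfB : f ∈ B) (hf : f ∈ M.fundCircuit e B) :
    M.IsBase (insert e (B \ {f})) := by
  have hI := (hB.indep.mem_fundCircuit_iff (by rwa [hB.closure_eq]) heB).1 hf
  rw [← insert_sdiff_singleton_comm (ne_of_mem_of_not_mem hfB heB).symm] at hI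
  exact hB.exchange_isBase_of_indep heB hI

theorem IsBase.exists_symm_exchange (hA : M.IsBase A) (hB : M.IsBase B) (ha : a ∈ A \ B) :
    ∃ b ∈ B \ A, M.IsBase (insert b (A \ {a})) ∧ M.IsBase (insert a (B \ {b})) := by
  have hC := hB.fundCircuit_isCircuit (hA.subset_ground ha.1) ha.2
  have hK := M.fundCocircuit_isCocircuit ha.1 hA
  obtain ⟨b, ⟨hbC, hbK⟩, hba⟩ := (hC.isCocircuit_inter_nontrivial hK
    ⟨a, M.mem_fundCircuit a B, M.mem_fundCocircuit a A⟩).exists_ne a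
  have hbB : b ∈ B := by simpa [hba] using M.fundCircuit_subset_insert a B hbC
  have hbE : b ∈ M.E \ A := by simpa [hba] using M.fundCocircuit_subset_insert_compl a A hbK
  refine ⟨b, ⟨hbB, hbE.2⟩, ?_, ?_⟩
  · rw [hA.mem_fundCocircuit_iff_mem_fundCircuit] at hbK
    exact hA.exchange_isBase_of_mem_fundCircuit hbE.1 hbE.2 ha.1 hbK
  · exact hB.exchange_isBase_of_mem_fundCircuit (hA.subset_ground ha.1) ha.2 hbB hbC

structure IsExchangeBijOn (M : Matroid α) (β : α → α) (A B : Set α) : Prop where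
  bijOn : BijOn β A B
  isBase_exchange : ∀ a ∈ A, M.IsBase (insert (β a) (A \ {a}))
  apply_eq_self : ∀ a ∈ A ∩ B, β a = a

theorem IsBase.isExchangeBijOn_id (hA : M.IsBase A) : M.IsExchangeBijOn id A A where
  bijOn := bijOn_id A
  isBase_exchange a ha := by rwa [id, insert_sdiff_singleton, insert_eq_of_mem ha]
  apply_eq_self _ _ := rfl

theorem IsExchangeBijOn.swap_comp [DecidableEq α] {β : α → α}
    (h : M.IsExchangeBijOn β A (insert a B \ {b})) (ha : a ∈ A \ B) (hb : b ∈ B \ A)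
    (hA' : M.IsBase (insert b (A \ {a}))) :
    M.IsExchangeBijOn (Equiv.swap a b ∘ β) A B := by
  have hab : a ≠ b := ne_of_mem_of_not_mem ha.1 hb.2
  have hβa : β a = a := h.apply_eq_self a ⟨ha.1, mem_insert a B, hab⟩
  have hfix : ∀ x ∈ A, x ≠ a → Equiv.swap a b (β x) = β x := fun x hx hxa ↦
    Equiv.swap_apply_of_ne_of_ne (fun hx' ↦ hxa (h.bijOn.injOn hx ha.1 (hx'.trans hβa.symm)))
      (h.bijOn.mapsTo hx).2
  refine ⟨?_, fun x hx ↦ ?_, fun x ⟨hxA, hxB⟩ ↦ ?_⟩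
  · have hswap : BijOn (Equiv.swap a b) (insert a B \ {b}) B := by
      have hsymm := (Equiv.swap b a).bijOn_symm_image (s := B)
      rwa [Equiv.symm_swap, Equiv.image_swap_of_mem_of_notMem hb.1 ha.2, Equiv.swap_comm] at hsymm
    exact hswap.comp h.bijOn
  · obtain rfl | hxa := eq_or_ne x a
    · simpa [hβa] using hA'
    · simpa [hfix x hx hxa] using h.isBase_exchange x hx
  · have hxa : x ≠ a := ne_of_mem_of_not_mem hxB ha.2
    have hxb : x ≠ b := ne_of_mem_of_not_mem hxA hb.2
    rw [Function.comp_apply, h.apply_eq_self x ⟨hxA, mem_insert_of_mem a hxB, hxb⟩,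
      Equiv.swap_apply_of_ne_of_ne hxa hxb]

theorem IsBase.exists_isExchangeBijOn (hA : M.IsBase A) (hB : M.IsBase B)
    (hfin : (A \ B).Finite) : ∃ β, M.IsExchangeBijOn β A B := by
  classical
  induction hk : (A \ B).ncard generalizing B with
  | zero =>
    obtain rfl := hA.eq_of_subset_isBase hB (sdiff_eq_empty.1 ((ncard_eq_zero hfin).1 hk))
    exact ⟨id, hA.isExchangeBijOn_id⟩
  | succ k ih =>
    obtain ⟨a, ha⟩ := nonempty_of_ncard_ne_zero (ne_of_eq_of_ne hk k.succ_ne_zero)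
    obtain ⟨b, hb, hA', hB'⟩ := hA.exists_symm_exchange hB ha
    have hdiff : A \ (insert a B \ {b}) = (A \ B) \ {a} := by
      ext x
      simp only [mem_sdiff, mem_insert_iff, mem_singleton_iff]
      grind
    rw [insert_sdiff_singleton_comm (ne_of_mem_of_not_mem ha.1 hb.2)] at hB'
    obtain ⟨β, hβ⟩ := ih hB' (hdiff ▸ hfin.sdiff)
      (by rw [hdiff, ncard_sdiff_singleton_of_mem ha, hk, Nat.add_sub_cancel])
    exact ⟨_, hβ.swap_comp ha hb hA'⟩

end Matroid

namespace FinMatroid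

variable {n : ℕ} (M : FinMatroid n)

def toMatroid : Matroid (Fin n) :=
  (IndepMatroid.ofFinset univ M.Indep M.empty_indep (fun _ _ hJ hIJ ↦ M.indep_subset hJ hIJ)
    (fun _ _ hI hJ hIJ ↦ by simpa [and_assoc] using M.exchange hJ hI hIJ)
    (fun _ _ ↦ subset_univ _)).matroid

theorem toMatroid_indep_coe_iff (I : Finset (Fin n)) : M.toMatroid.Indep I ↔ M.Indep I := by
  simp [toMatroid]

theorem isBasis_iff_maximal (A : Finset (Fin n)) : M.IsBasis A ↔ Maximal M.Indep A :=
  maximal_iff.symm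

theorem toMatroid_isBase_coe_iff (A : Finset (Fin n)) : M.toMatroid.IsBase A ↔ M.IsBasis A := by
  have h := Finset.coeEmb.maximal_apply_mem_iff (t := {I | M.toMatroid.Indep I}) (x := A)
    fun s _ ↦ ⟨(toFinite s).toFinset, by simp⟩
  simpa [Matroid.isBase_iff_maximal_indep, isBasis_iff_maximal, toMatroid_indep_coe_iff] using h

end FinMatroid

/-- Brualdi's lemma: for bases `A, B` there is a bijection `β : A → B`,
identity on `A ∩ B`, such that `(A \ {a}) ∪ {β(a)}` is a basis for all `a ∈ A`. -/
theorem brualdi_exchange {n : ℕ} (M : FinMatroid n) (A B : Finset (Fin n))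
    (hA : M.IsBasis A) (hB : M.IsBasis B) :
    ∃ β : Fin n → Fin n,
      Set.BijOn β (A : Set (Fin n)) (B : Set (Fin n)) ∧
      (∀ a ∈ A, M.IsBasis (insert (β a) (A.erase a))) ∧
      (∀ a ∈ A ∩ B, β a = a) := by
  obtain ⟨β, hβ⟩ := ((M.toMatroid_isBase_coe_iff A).2 hA).exists_isExchangeBijOn
    ((M.toMatroid_isBase_coe_iff B).2 hB) (toFinite _)
  refine ⟨β, hβ.bijOn, fun a ha ↦ ?_, fun a ha ↦ hβ.apply_eq_self a (by simpa using ha)⟩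
  rw [← M.toMatroid_isBase_coe_iff, Finset.coe_insert, Finset.coe_erase]
  exact hβ.isBase_exchange a ha
end

section
/- Let M = ([n], I) be a matroid and A, B ∈ I. Then there exists a map α : B\A → (A\B) ∪ {∅} such that (i) for each b ∈ B\A, (A \ {α(b)}) ∪ {b} ∈ I (where A \ {∅} = A), and (ii) each a ∈ A\B has at most one preimage under α. -/
/-- Grow an independent subset of `insert b A` to one of size at least `#A`. -/
lemma finmatroid_grow {n : ℕ} (M : FinMatroid n) (A : Finset (Fin n)) (b : Fin n)
    (hA : M.Indep A) :
    ∀ k (J : Finset (Fin n)), M.Indep J → J ⊆ insert b A → A.card ≤ J.card + k →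
      ∃ J', J ⊆ J' ∧ J' ⊆ insert b A ∧ M.Indep J' ∧ A.card ≤ J'.card := by
  intro k
  induction k with
  | zero => intro J hJ hsub hcard; exact ⟨J, Finset.Subset.refl J, hsub, hJ, by omega⟩
  | succ k ih =>
    intro J hJ hsub hcard
    by_cases h : A.card ≤ J.card
    · exact ⟨J, Finset.Subset.refl J, hsub, hJ, h⟩
    · obtain ⟨x, hx, hxi⟩ := M.exchange hA hJ (by omega)
      rw [Finset.mem_sdiff] at hx
      obtain ⟨J', h1, h2, h3, h4⟩ := ih (insert x J) hxi
        (Finset.insert_subset (Finset.mem_insert_of_mem hx.1) hsub)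
        (by rw [Finset.card_insert_of_notMem hx.2]; omega)
      exact ⟨J', (Finset.subset_insert x J).trans h1, h2, h3, h4⟩

/-- If `insert b A` is dependent but `insert b K` is independent for `K ⊆ A`,
then some `a ∈ A \ K` can be exchanged for `b`. -/
lemma finmatroid_exch {n : ℕ} (M : FinMatroid n) (A K : Finset (Fin n)) (b : Fin n)
    (hA : M.Indep A) (hKA : K ⊆ A) (hb : b ∉ A) (hdep : ¬ M.Indep (insert b A))
    (hK : M.Indep (insert b K)) :
    ∃ a ∈ A, a ∉ K ∧ M.Indep (insert b (A.erase a)) := by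
  obtain ⟨J', h1, h2, h3, h4⟩ := finmatroid_grow M A b hA A.card (insert b K) hK
    (Finset.insert_subset_insert b hKA) (by omega)
  have hbJ : b ∈ J' := h1 (Finset.mem_insert_self b K)
  have hKJ : K ⊆ J' := (Finset.subset_insert b K).trans h1
  have hne : J' ≠ insert b A := fun h => hdep (h ▸ h3)
  have hss : J' ⊂ insert b A := Finset.ssubset_iff_subset_ne.mpr ⟨h2, hne⟩
  obtain ⟨a, haA, haJ⟩ := Finset.exists_of_ssubset hss
  have hab : a ≠ b := fun h => haJ (h ▸ hbJ)
  have haA' : a ∈ A := by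
    rcases Finset.mem_insert.mp haA with h | h
    · exact absurd h hab
    · exact h
  have haK : a ∉ K := fun h => haJ (hKJ h)
  -- J' ⊆ insert b (A.erase a) and cards agree, so J' = insert b (A.erase a)
  have hsub2 : J' ⊆ insert b (A.erase a) := by
    intro x hx
    rcases Finset.mem_insert.mp (h2 hx) with h | h
    · exact Finset.mem_insert.mpr (Or.inl h)
    · exact Finset.mem_insert.mpr (Or.inr (Finset.mem_erase.mpr
        ⟨fun he => haJ (he ▸ hx), h⟩))
  have hcard2 : (insert b (A.erase a)).card ≤ J'.card := by
    have h5 : b ∉ A.erase a := fun h => hb (Finset.mem_of_mem_erase h)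
    rw [Finset.card_insert_of_notMem h5, Finset.card_erase_of_mem haA']
    have : 1 ≤ A.card := Finset.card_pos.mpr ⟨a, haA'⟩
    omega
  have heq : J' = insert b (A.erase a) := Finset.eq_of_subset_of_card_le hsub2 hcard2
  exact ⟨a, haA', haK, heq ▸ h3⟩

/-- Any independent subset of `X` is at most as large as a maximal one. -/
lemma finmatroid_max {n : ℕ} (M : FinMatroid n) (X J K : Finset (Fin n))
    (hJ : M.Indep J) (hK : M.Indep K) (hJX : J ⊆ X)
    (hmax : ∀ x ∈ X, x ∉ K → ¬ M.Indep (insert x K)) :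
    J.card ≤ K.card := by
  by_contra h
  obtain ⟨x, hx, hxi⟩ := M.exchange hJ hK (by omega)
  rw [Finset.mem_sdiff] at hx
  exact hmax x (hJX hx.1) hx.2 hxi

/-- Exchange map of Lee et al. (2010): for independent `A, B` there is a map
`α : B \ A → (A \ B) ∪ {∅}` (here `Option`-valued, `none` playing the role of
`∅`) such that `(A \ {α(b)}) ∪ {b}` is independent and every `a ∈ A \ B` has at
most one preimage. -/
theorem lee_exchange_map {n : ℕ} (M : FinMatroid n) (A B : Finset (Fin n))
    (hA : M.Indep A) (hB : M.Indep B) :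
    ∃ α : Fin n → Option (Fin n),
      (∀ b ∈ B \ A,
        (α b = none → M.Indep (insert b A)) ∧
        (∀ a : Fin n, α b = some a → a ∈ A \ B ∧ M.Indep (insert b (A.erase a)))) ∧
      (∀ a ∈ A \ B, ∀ b₁ ∈ B \ A, ∀ b₂ ∈ B \ A,
        α b₁ = some a → α b₂ = some a → b₁ = b₂) := by
  classical
  -- S₁ : the elements of B \ A that cannot be added to A directly
  set S₁ : Finset (Fin n) := (B \ A).filter (fun b => ¬ M.Indep (insert b A)) with hS₁
  set t : {x // x ∈ S₁} → Finset (Fin n) :=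
    fun b => (A \ B).filter (fun a => M.Indep (insert b.1 (A.erase a))) with ht
  -- Hall's condition
  have hall : ∀ s : Finset {x // x ∈ S₁}, s.card ≤ (s.biUnion t).card := by
    intro s
    set N : Finset (Fin n) := s.biUnion t with hN
    set S : Finset (Fin n) := s.image Subtype.val with hS
    have hScard : S.card = s.card := Finset.card_image_of_injective s Subtype.val_injective
    have hNAB : N ⊆ A \ B := by
      intro x hx
      obtain ⟨b, _, hb⟩ := Finset.mem_biUnion.mp hx
      exact (Finset.mem_filter.mp hb).1
    have hSS₁ : S ⊆ S₁ := by
      intro x hx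
      obtain ⟨b, _, hb⟩ := Finset.mem_image.mp hx
      exact hb ▸ b.2
    have hSBA : S ⊆ B \ A := hSS₁.trans (Finset.filter_subset _ _)
    set K : Finset (Fin n) := (A ∩ B) ∪ N with hKdef
    have hKA : K ⊆ A :=
      Finset.union_subset (Finset.inter_subset_left) (hNAB.trans (Finset.sdiff_subset))
    have hKind : M.Indep K := M.indep_subset hA hKA
    set J : Finset (Fin n) := (A ∩ B) ∪ S with hJdef
    have hJB : J ⊆ B :=
      Finset.union_subset (Finset.inter_subset_right) (hSBA.trans (Finset.sdiff_subset))
    have hJind : M.Indep J := M.indep_subset hB hJB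
    have hJX : J ⊆ K ∪ S := by
      apply Finset.union_subset _ Finset.subset_union_right
      exact (Finset.subset_union_left (s₂ := N)).trans Finset.subset_union_left
    have hmax : ∀ x ∈ K ∪ S, x ∉ K → ¬ M.Indep (insert x K) := by
      intro x hx hxK hxi
      have hxS : x ∈ S := by
        rcases Finset.mem_union.mp hx with h | h
        · exact absurd h hxK
        · exact h
      have hxS₁ : x ∈ S₁ := hSS₁ hxS
      have hxBA : x ∈ B \ A := (Finset.mem_filter.mp hxS₁).1
      have hxdep : ¬ M.Indep (insert x A) := (Finset.mem_filter.mp hxS₁).2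
      have hxnA : x ∉ A := (Finset.mem_sdiff.mp hxBA).2
      obtain ⟨a, haA, haK, hai⟩ := finmatroid_exch M A K x hA hKA hxnA hxdep hxi
      have haAB : a ∈ A \ B := by
        rw [Finset.mem_sdiff]
        refine ⟨haA, fun hb => haK (Finset.mem_union_left _ (Finset.mem_inter.mpr ⟨haA, hb⟩))⟩
      -- a belongs to t b for the b ∈ s with ↑b = x, so a ∈ N ⊆ K, contradiction
      obtain ⟨b, hbs, hbx⟩ := Finset.mem_image.mp hxS
      have : a ∈ N := Finset.mem_biUnion.mpr ⟨b, hbs,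
        Finset.mem_filter.mpr ⟨haAB, by rw [hbx]; exact hai⟩⟩
      exact haK (Finset.mem_union_right _ this)
    have hle : J.card ≤ K.card := finmatroid_max M (K ∪ S) J K hJind hKind hJX hmax
    have hdJ : Disjoint (A ∩ B) S := by
      refine Finset.disjoint_left.mpr fun x hx hxS => ?_
      exact (Finset.mem_sdiff.mp (hSBA hxS)).2 (Finset.mem_inter.mp hx).1
    have hJcard : J.card = (A ∩ B).card + S.card := Finset.card_union_of_disjoint hdJ
    have hKcard : K.card ≤ (A ∩ B).card + N.card := Finset.card_union_le _ _
    omega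
  obtain ⟨f, hfinj, hf⟩ := (Finset.all_card_le_biUnion_card_iff_exists_injective t).mp hall
  refine ⟨fun x => if h : x ∈ S₁ then some (f ⟨x, h⟩) else none, ?_, ?_⟩
  · intro b hbBA
    constructor
    · intro hnone
      by_cases h : b ∈ S₁
      · simp [h] at hnone
      · rw [hS₁, Finset.mem_filter, not_and] at h
        exact not_not.mp (h hbBA)
    · intro a hsome
      by_cases h : b ∈ S₁
      · simp only [dif_pos h, Option.some_inj] at hsome
        have := hf ⟨b, h⟩
        rw [hsome] at this
        exact ⟨(Finset.mem_filter.mp this).1, (Finset.mem_filter.mp this).2⟩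
      · simp [dif_neg h] at hsome
  · intro a _ b₁ _ b₂ _ h₁ h₂
    by_cases hb₁ : b₁ ∈ S₁
    · by_cases hb₂ : b₂ ∈ S₁
      · simp only [dif_pos hb₁, Option.some_inj] at h₁
        simp only [dif_pos hb₂, Option.some_inj] at h₂
        have : f ⟨b₁, hb₁⟩ = f ⟨b₂, hb₂⟩ := by rw [h₁, h₂]
        exact congrArg Subtype.val (hfinj this)
      · simp [dif_neg hb₂] at h₂
    · simp [dif_neg hb₁] at h₁
end

section
/- Let F be a submodular set function on P([n]), A, B independent sets of a matroid, and α : B\A → (A\B) ∪ {∅} a map such that each a ∈ A\B has at most one preimage. Then Σ_{b∈B\A} (F(A) − F((A\{α(b)})∪{b})) + Σ_{a∈A\B, α⁻¹(a)=∅} (F(A) − F(A\{a})) ≤ 2F(A) − F(A∪B) − F(A∩B). -/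
open Finset

def Submodular {n : ℕ} (F : Finset (Fin n) → ℝ) : Prop :=
  ∀ A B : Finset (Fin n), F (A ∪ B) + F (A ∩ B) ≤ F A + F B

private lemma sum_add_bound {n : ℕ} (F : Finset (Fin n) → ℝ) (hF : Submodular F)
    (A : Finset (Fin n)) (S : Finset (Fin n)) :
    ∑ b ∈ S, (F A - F (insert b A)) ≤ F A - F (A ∪ S) := by
  classical
  induction S using Finset.induction_on with
  | empty => simp
  | @insert b S' hb ih =>
    rw [Finset.sum_insert hb]
    have h := hF (insert b A) (A ∪ S')
    have hu : insert b A ∪ (A ∪ S') = A ∪ insert b S' := by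
      ext x
      simp only [Finset.mem_union, Finset.mem_insert]
      tauto
    have hi : insert b A ∩ (A ∪ S') = A := by
      ext x
      simp only [Finset.mem_inter, Finset.mem_union, Finset.mem_insert]
      constructor
      · rintro ⟨rfl | hx, h2 | h2⟩
        · exact h2
        · exact absurd h2 hb
        · exact hx
        · exact hx
      · intro hx; exact ⟨Or.inr hx, Or.inl hx⟩
    rw [hu, hi] at h
    linarith

private lemma sum_erase_bound {n : ℕ} (F : Finset (Fin n) → ℝ) (hF : Submodular F)
    (R : Finset (Fin n)) (T : Finset (Fin n)) (C : Fin n → Finset (Fin n))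
    (h1 : ∀ a ∈ T, R ∪ T.erase a ⊆ C a) (h2 : ∀ a ∈ T, a ∉ C a) :
    ∑ a ∈ T, (F (insert a (C a)) - F (C a)) ≤ F (R ∪ T) - F R := by
  classical
  induction T using Finset.induction_on with
  | empty => simp
  | @insert a T' ha ih =>
    rw [Finset.sum_insert ha]
    have hsub : R ∪ T' ⊆ C a := by
      have := h1 a (Finset.mem_insert_self a T')
      rwa [Finset.erase_insert ha] at this
    have hnot : a ∉ C a := h2 a (Finset.mem_insert_self a T')
    have h := hF (C a) (insert a (R ∪ T'))
    have hu : C a ∪ insert a (R ∪ T') = insert a (C a) := by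
      rw [Finset.union_insert, Finset.union_eq_left.mpr hsub]
    have hi : C a ∩ insert a (R ∪ T') = R ∪ T' := by
      rw [Finset.inter_insert_of_notMem hnot, Finset.inter_eq_right.mpr hsub]
    rw [hu, hi] at h
    have ih' : ∑ a ∈ T', (F (insert a (C a)) - F (C a)) ≤ F (R ∪ T') - F R := by
      apply ih
      · intro a' ha'
        refine Finset.Subset.trans ?_ (h1 a' (Finset.mem_insert_of_mem ha'))
        exact Finset.union_subset_union_right
          (Finset.erase_subset_erase a' (Finset.subset_insert a T'))
      · intro a' ha'
        exact h2 a' (Finset.mem_insert_of_mem ha')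
    have hins : R ∪ insert a T' = insert a (R ∪ T') := by
      ext x; simp only [Finset.mem_union, Finset.mem_insert]; tauto
    rw [hins]
    linarith

/-- Proposition 4 of the paper. -/
theorem exchange_sum_bound {n : ℕ} (F : Finset (Fin n) → ℝ) (hF : Submodular F)
    (M : FinMatroid n) (A B : Finset (Fin n)) (hA : M.Indep A) (hB : M.Indep B)
    (α : Fin n → Option (Fin n))
    (hα : ∀ b ∈ B \ A,
      (α b = none → M.Indep (insert b A)) ∧
      (∀ a : Fin n, α b = some a → a ∈ A \ B ∧ M.Indep (insert b (A.erase a))))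
    (hinj : ∀ a ∈ A \ B, ∀ b₁ ∈ B \ A, ∀ b₂ ∈ B \ A,
      α b₁ = some a → α b₂ = some a → b₁ = b₂) :
    (∑ b ∈ B \ A,
        (F A - F ((α b).elim (insert b A) (fun a => insert b (A.erase a))))) +
      (∑ a ∈ (A \ B).filter (fun a => ∀ b ∈ B \ A, α b ≠ some a),
        (F A - F (A.erase a))) ≤
    2 * F A - F (A ∪ B) - F (A ∩ B) := by
  classical
  set C : Fin n → Finset (Fin n) := fun a =>
    if h : ∃ b ∈ B \ A, α b = some a then insert h.choose (A.erase a) else A.erase a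
    with hCdef
  have fact1 : ∀ b ∈ B \ A, ∀ a, α b = some a → C a = insert b (A.erase a) := by
    intro b hb a hab
    have hQ : ∃ b' ∈ B \ A, α b' = some a := ⟨b, hb, hab⟩
    have haAB : a ∈ A \ B := ((hα b hb).2 a hab).1
    have hc := hQ.choose_spec
    have : hQ.choose = b := hinj a haAB _ hc.1 b hb hc.2 hab
    simp only [hCdef, dif_pos hQ, this]
  have hC1 : ∀ a ∈ A \ B, (A ∩ B) ∪ (A \ B).erase a ⊆ C a := by
    intro a ha
    have hsub : (A ∩ B) ∪ (A \ B).erase a ⊆ A.erase a := by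
      intro x hx
      rw [Finset.mem_union] at hx
      rw [Finset.mem_erase]
      rcases hx with hx | hx
      · rw [Finset.mem_inter] at hx
        refine ⟨?_, hx.1⟩
        rintro rfl
        exact (Finset.mem_sdiff.mp ha).2 hx.2
      · rw [Finset.mem_erase, Finset.mem_sdiff] at hx
        exact ⟨hx.1, hx.2.1⟩
    refine hsub.trans ?_
    simp only [hCdef]
    split
    · exact Finset.subset_insert _ _
    · exact Finset.Subset.refl _
  have hC2 : ∀ a ∈ A \ B, a ∉ C a := by
    intro a ha
    simp only [hCdef]
    split
    · rename_i hQ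
      rw [Finset.mem_insert]
      rintro (h | hx)
      · exact (Finset.mem_sdiff.mp hQ.choose_spec.1).2 (h ▸ (Finset.mem_sdiff.mp ha).1)
      · exact (Finset.notMem_erase a A) hx
    · exact Finset.notMem_erase a A
  -- g
  set g : Fin n → ℝ := fun a => F (insert a (C a)) - F (C a) with hgdef
  -- pointwise rewrite of the first sum
  have step1 : ∀ b ∈ B \ A,
      F A - F ((α b).elim (insert b A) (fun a => insert b (A.erase a))) =
        (F A - F (insert b A)) + (α b).elim 0 g := by
    intro b hb
    cases hab : α b with
    | none => simp
    | some a =>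
      have haAB : a ∈ A \ B := ((hα b hb).2 a hab).1
      have hCa : C a = insert b (A.erase a) := fact1 b hb a hab
      have hins : insert a (C a) = insert b A := by
        rw [hCa, Finset.insert_comm, Finset.insert_erase (Finset.mem_sdiff.mp haAB).1]
      simp only [Option.elim, hgdef]
      rw [hins, hCa]
      ring
  -- reindex the some-part
  have step2 : ∑ b ∈ B \ A, (α b).elim 0 g =
      ∑ a ∈ (A \ B).filter (fun a => ∃ b ∈ B \ A, α b = some a), g a := by
    rw [← Finset.sum_filter_add_sum_filter_not (B \ A) (fun b => (α b).isSome)]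
    have hz : ∑ b ∈ (B \ A).filter (fun b => ¬ (α b).isSome), (α b).elim 0 g = 0 := by
      apply Finset.sum_eq_zero
      intro b hb
      rw [Finset.mem_filter] at hb
      rw [Option.not_isSome_iff_eq_none.mp hb.2]
      rfl
    rw [hz, add_zero]
    apply Finset.sum_bij (fun b hb => ((α b).get (Finset.mem_filter.mp hb).2))
    · intro b hb
      rw [Finset.mem_filter] at hb
      have hab : α b = some ((α b).get hb.2) := (Option.some_get hb.2).symm
      rw [Finset.mem_filter]
      exact ⟨((hα b hb.1).2 _ hab).1, ⟨b, hb.1, hab⟩⟩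
    · intro b₁ hb₁ b₂ hb₂ heq
      rw [Finset.mem_filter] at hb₁ hb₂
      have h1 : α b₁ = some ((α b₁).get hb₁.2) := (Option.some_get hb₁.2).symm
      have h2 : α b₂ = some ((α b₂).get hb₂.2) := (Option.some_get hb₂.2).symm
      exact hinj _ ((hα b₁ hb₁.1).2 _ h1).1 b₁ hb₁.1 b₂ hb₂.1 h1 (heq ▸ h2)
    · intro a ha
      rw [Finset.mem_filter] at ha
      obtain ⟨b, hb, hab⟩ := ha.2
      have hs : (α b).isSome := by rw [hab]; rfl
      refine ⟨b, Finset.mem_filter.mpr ⟨hb, hs⟩, ?_⟩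
      simp [hab]
    · intro b hb
      rw [Finset.mem_filter] at hb
      obtain ⟨a, hab⟩ := Option.isSome_iff_exists.mp hb.2
      simp [hab]
  -- the none-preimage part equals g there
  have step3 : ∑ a ∈ (A \ B).filter (fun a => ∀ b ∈ B \ A, α b ≠ some a),
      (F A - F (A.erase a)) =
      ∑ a ∈ (A \ B).filter (fun a => ¬ ∃ b ∈ B \ A, α b = some a), g a := by
    apply Finset.sum_congr
    · apply Finset.filter_congr
      intro a _
      push_neg
      simp
    · intro a ha
      rw [Finset.mem_filter] at ha
      have hCa : C a = A.erase a := by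
        simp only [hCdef]
        rw [dif_neg ha.2]
      rw [hgdef]
      simp only [hCa, Finset.insert_erase (Finset.mem_sdiff.mp ha.1).1]
  rw [Finset.sum_congr rfl step1, Finset.sum_add_distrib, step2, step3]
  have key2 : ∑ a ∈ (A \ B).filter (fun a => ∃ b ∈ B \ A, α b = some a), g a +
      ∑ a ∈ (A \ B).filter (fun a => ¬ ∃ b ∈ B \ A, α b = some a), g a =
      ∑ a ∈ A \ B, g a :=
    Finset.sum_filter_add_sum_filter_not (A \ B) _ g
  have b1 : ∑ b ∈ B \ A, (F A - F (insert b A)) ≤ F A - F (A ∪ B) := by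
    have := sum_add_bound F hF A (B \ A)
    rwa [Finset.union_sdiff_self_eq_union] at this
  have b2 : ∑ a ∈ A \ B, g a ≤ F A - F (A ∩ B) := by
    have hAB : A ∩ B ∪ A \ B = A := by
      ext x
      simp only [Finset.mem_union, Finset.mem_inter, Finset.mem_sdiff]
      tauto
    have := sum_erase_bound F hF (A ∩ B) (A \ B) C hC1 hC2
    rwa [hAB] at this
  linarith [key2]
end

section
/- Let L be a linear (modular, normalized) set function and F a normalized non-decreasing submodular function on P([n]), and let M=([n],I) be a matroid with bases B. Suppose S = {s_1,…,s_k} ∈ B is built greedily: at step i, s_i maximizes (L+F)(S_{i−1}∪{x}) over x ∉ S_{i−1} with S_{i−1}∪{x} ∈ I. Then for every O ∈ B, L(S) + 2F(S) ≥ L(O) + F(O). -/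
/-!
Write `S_i = {s_0, …, s_{i-1}}` and `S = S_k`. Hall's theorem gives a bijection `f` from the
greedy steps onto `O` with `f i ∉ S_i` and `S_i ∪ {f i}` independent (a form of Brualdi's
exchange bijection). Greediness bounds `ℓ(f i)` plus the marginal gain of `f i` over `S_i` by the
gain of step `i`, and submodularity lets the marginal over `S_i` be replaced by the one over `S`.
Summing over `i`, `L(O) + ∑_{o ∈ O} (F(S ∪ {o}) - F(S)) ≤ L(S) + F(S)`, and that sum dominates
`F(O) - F(S)` by submodularity and monotonicity.
-/

open Finset Function

theorem Finset.exists_injective_mem_of_card_ge {α : Type*} [DecidableEq α] {k : ℕ}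
    (t : Fin k → Finset α) (hcard : ∀ i : Fin k, k - i ≤ #(t i)) :
    ∃ f : Fin k → α, Injective f ∧ ∀ i, f i ∈ t i := by
  refine (all_card_le_biUnion_card_iff_exists_injective t).1 fun J => ?_
  rcases J.eq_empty_or_nonempty with rfl | hJ
  · simp
  calc #J ≤ #(Ici (J.min' hJ)) := card_le_card fun j hj => mem_Ici.2 (J.min'_le j hj)
    _ = k - J.min' hJ := Fin.card_Ici _
    _ ≤ #(t (J.min' hJ)) := hcard _
    _ ≤ #(J.biUnion t) := card_le_card (subset_biUnion_of_mem t (J.min'_mem hJ))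

theorem Finset.card_image_range_of_notMem {α : Type*} [DecidableEq α] {k : ℕ} (s : ℕ → α)
    (h : ∀ i < k, s i ∉ (range i).image s) : #((range k).image s) = k := by
  induction k with
  | zero => simp
  | succ k ih =>
    rw [range_add_one, image_insert, card_insert_of_notMem (h k k.lt_succ_self),
      ih fun i hi => h i (hi.trans k.lt_succ_self)]

namespace FinMatroid

theorem IsBasis.card_eq {n : ℕ} {M : FinMatroid n} {A B : Finset (Fin n)} (hA : M.IsBasis A)
    (hB : M.IsBasis B) : #A = #B := by
  have key : ∀ {A B : Finset (Fin n)}, M.IsBasis A → M.IsBasis B → ¬ #A < #B := by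
    intro A B hA hB hlt
    obtain ⟨x, hx, hxA⟩ := M.exchange hB.1 hA.1 hlt
    exact (mem_sdiff.1 hx).2 (hA.2 _ hxA (subset_insert x A) ▸ mem_insert_self x A)
  exact le_antisymm (not_lt.1 (key hB hA)) (not_lt.1 (key hA hB))

variable {n : ℕ} (M : FinMatroid n)

theorem exists_indep_subset_union_card_eq {A B : Finset (Fin n)} (hA : M.Indep A)
    (hB : M.Indep B) (hAB : #A ≤ #B) :
    ∃ T, M.Indep T ∧ A ⊆ T ∧ T ⊆ A ∪ B ∧ #T = #B := by
  induction hd : #B - #A generalizing A with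
  | zero => exact ⟨A, hA, subset_rfl, subset_union_left, by omega⟩
  | succ d ih =>
    obtain ⟨x, hx, hxA⟩ := M.exchange hB hA (by omega)
    rw [mem_sdiff] at hx
    have hcard : #(insert x A) = #A + 1 := card_insert_of_notMem hx.2
    obtain ⟨T, hT, hxAT, hTU, hTcard⟩ := ih hxA (by omega) (by omega)
    refine ⟨T, hT, (subset_insert x A).trans hxAT, hTU.trans ?_, hTcard⟩
    rw [insert_union]
    exact insert_subset (mem_union_right A hx.1) subset_rfl

theorem card_sub_card_le_card_indep_insert {A B : Finset (Fin n)} (hA : M.Indep A)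
    (hB : M.Indep B) (hAB : #A ≤ #B) [DecidablePred fun b => M.Indep (insert b A)] :
    #B - #A ≤ #{b ∈ B \ A | M.Indep (insert b A)} := by
  obtain ⟨T, hT, hAT, hTU, hTcard⟩ := M.exists_indep_subset_union_card_eq hA hB hAB
  calc #B - #A = #(T \ A) := by rw [card_sdiff_of_subset hAT, hTcard]
    _ ≤ _ := card_le_card fun b hb => by
      obtain ⟨hbT, hbA⟩ := mem_sdiff.1 hb
      have hbB : b ∈ B := (mem_union.1 (hTU hbT)).resolve_left hbA
      exact mem_filter.2 ⟨mem_sdiff.2 ⟨hbB, hbA⟩, M.indep_subset hT (insert_subset hbT hAT)⟩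

theorem indep_image_range {k : ℕ} (s : ℕ → Fin n)
    (h : ∀ i < k, M.Indep (insert (s i) ((range i).image s))) :
    M.Indep ((range k).image s) := by
  cases k with
  | zero => simpa using M.empty_indep
  | succ k =>
    rw [range_add_one, image_insert]
    exact h k k.lt_succ_self

theorem exists_injective_exchange {k : ℕ} (S : ℕ → Finset (Fin n))
    (hindep : ∀ i < k, M.Indep (S i)) (hcard : ∀ i < k, #(S i) = i)
    {O : Finset (Fin n)} (hO : M.Indep O) (hOk : #O = k) :
    ∃ f : Fin k → Fin n, Injective f ∧ univ.image f = O ∧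
      ∀ i : Fin k, f i ∉ S i ∧ M.Indep (insert (f i) (S i)) := by
  classical
  let t : Fin k → Finset (Fin n) := fun i => {o ∈ O \ S i | M.Indep (insert o (S i))}
  have ht : ∀ i : Fin k, k - i ≤ #(t i) := fun i => by
    have := M.card_sub_card_le_card_indep_insert (hindep i i.isLt) hO
      (by rw [hcard i i.isLt]; omega)
    rwa [hOk, hcard i i.isLt] at this
  obtain ⟨f, hf_inj, hf_mem⟩ := exists_injective_mem_of_card_ge t ht
  have hf_mem' : ∀ i, f i ∈ O ∧ f i ∉ S i ∧ M.Indep (insert (f i) (S i)) := fun i => by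
    simpa [t, and_assoc] using hf_mem i
  refine ⟨f, hf_inj, ?_, fun i => (hf_mem' i).2⟩
  refine eq_of_subset_of_card_le (image_subset_iff.2 fun i _ => (hf_mem' i).1) ?_
  rw [card_image_of_injective _ hf_inj, card_univ, Fintype.card_fin, hOk]

theorem exists_injective_exchange_of_greedy {k : ℕ} {s : ℕ → Fin n}
    (hstep : ∀ i < k, s i ∉ (range i).image s ∧ M.Indep (insert (s i) ((range i).image s)))
    {O : Finset (Fin n)} (hO : M.Indep O) (hOk : #O = k) :
    ∃ f : Fin k → Fin n, Injective f ∧ univ.image f = O ∧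
      ∀ i : Fin k, f i ∉ (range i).image s ∧ M.Indep (insert (f i) ((range i).image s)) :=
  M.exists_injective_exchange _
    (fun _ hi => M.indep_image_range s fun j hj => (hstep j (hj.trans hi)).2)
    (fun _ hi => card_image_range_of_notMem s fun j hj => (hstep j (hj.trans hi)).1) hO hOk

end FinMatroid

namespace Submodular

variable {n : ℕ} {F : Finset (Fin n) → ℝ}

theorem marginal_antitone (hF : Submodular F) (hmono : Monotone F) {A B : Finset (Fin n)}
    (hAB : A ⊆ B) (x : Fin n) : F (insert x B) - F B ≤ F (insert x A) - F A := by
  have h := hF (insert x A) B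
  rw [insert_union, union_eq_right.2 hAB] at h
  have : F A ≤ F (insert x A ∩ B) := hmono (subset_inter (subset_insert x A) hAB)
  linarith

theorem le_add_sum_marginal (hF : Submodular F) (hmono : Monotone F) (S O : Finset (Fin n)) :
    F O ≤ F S + ∑ o ∈ O, (F (insert o S) - F S) := by
  suffices F (S ∪ O) - F S ≤ ∑ o ∈ O, (F (insert o S) - F S) by
    linarith [hmono (subset_union_right : O ⊆ S ∪ O)]
  induction O using Finset.induction_on with
  | empty => simp
  | insert a O ha ih =>
    rw [sum_insert ha, union_insert]
    have := hF.marginal_antitone hmono (subset_union_left : S ⊆ S ∪ O) a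
    linarith

end Submodular

/-- Theorem 4 of the paper: if `S` is produced by the greedy algorithm for
`L + F` on the bases of a matroid, with `L` linear and `F` normalized,
non-decreasing, submodular, then `L(S) + 2F(S) ≥ L(O) + F(O)` for any basis `O`. -/
theorem greedy_guarantee {n k : ℕ} (M : FinMatroid n)
    (ℓ : Fin n → ℝ) (F : Finset (Fin n) → ℝ)
    (hF : Submodular F) (hFmono : ∀ A B : Finset (Fin n), A ⊆ B → F A ≤ F B)
    (hFnorm : F ∅ = 0)
    (L : Finset (Fin n) → ℝ) (hL : ∀ A : Finset (Fin n), L A = ∑ i ∈ A, ℓ i)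
    (s : ℕ → Fin n)
    (hstep : ∀ i < k, s i ∉ (Finset.range i).image s ∧
      M.Indep (insert (s i) ((Finset.range i).image s)))
    (hgreedy : ∀ i < k, ∀ x : Fin n, x ∉ (Finset.range i).image s →
      M.Indep (insert x ((Finset.range i).image s)) →
      L (insert x ((Finset.range i).image s)) +
        F (insert x ((Finset.range i).image s)) ≤
      L (insert (s i) ((Finset.range i).image s)) +
        F (insert (s i) ((Finset.range i).image s)))
    (hbasis : M.IsBasis ((Finset.range k).image s)) :
    ∀ O : Finset (Fin n), M.IsBasis O →
      L O + F O ≤ L ((Finset.range k).image s) + 2 * F ((Finset.range k).image s) := by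
  classical
  intro O hO
  set S : ℕ → Finset (Fin n) := fun i => (range i).image s with hS
  obtain ⟨f, hf_inj, hf_image, hf_exch⟩ := M.exists_injective_exchange_of_greedy hstep hO.1
    (by rw [hO.card_eq hbasis, card_image_range_of_notMem s fun j hj => (hstep j hj).1])
  have hmono : Monotone F := fun A B hAB => hFmono A B hAB
  have hstep_gain : ∀ i : Fin k, ℓ (f i) + (F (insert (f i) (S k)) - F (S k)) ≤
      L (S (i + 1)) + F (S (i + 1)) - (L (S i) + F (S i)) := fun i => by
    have hgain := hgreedy i i.isLt (f i) (hf_exch i).1 (hf_exch i).2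
    have hL_insert : L (insert (f i) (S i)) = L (S i) + ℓ (f i) := by
      rw [hL, hL, sum_insert (hf_exch i).1, add_comm]
    have hmarg := hF.marginal_antitone hmono (image_subset_image
      (range_subset_range.2 i.isLt.le) : S i ⊆ S k) (f i)
    have hS_succ : S (i + 1) = insert (s i) (S i) := by
      simp only [hS, range_add_one, image_insert]
    rw [hS_succ]
    linarith
  calc L O + F O ≤ ∑ o ∈ O, (ℓ o + (F (insert o (S k)) - F (S k))) + F (S k) := by
        rw [sum_add_distrib, ← hL]
        linarith [hF.le_add_sum_marginal hmono (S k) O]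
    _ = ∑ i, (ℓ (f i) + (F (insert (f i) (S k)) - F (S k))) + F (S k) := by
      rw [← hf_image, sum_image fun x _ y _ h => hf_inj h]
    _ ≤ ∑ i : Fin k, (L (S (i + 1)) + F (S (i + 1)) - (L (S i) + F (S i))) + F (S k) := by
      gcongr with i
      exact hstep_gain i
    _ = L (S k) + 2 * F (S k) := by
      rw [Fin.sum_univ_eq_sum_range (fun i => L (S (i + 1)) + F (S (i + 1)) - (L (S i) + F (S i))),
        sum_range_sub (fun i => L (S i) + F (S i))]
      simp only [hS, range_zero, image_empty, hL, sum_empty, hFnorm]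
      ring
end

section
/- Let L₁, L₂ be set functions, F₁, F₂ non-negative set functions, κ ≥ 1, and define ℒ(λ,S) = L₁(S) − F₁(S) − λ(L₂(S)+F₂(S)) and ℒ_κ(λ,S) = L₁(S) − κF₁(S) − λ(L₂(S)+κF₂(S)). Suppose S satisfies the approximation guarantee ℒ_κ(λ,S) ≤ min_{A∈𝒜} ℒ(λ,A). If ℒ_κ(λ,S) ≥ 0 and L₂(A)+F₂(A) > 0 for all A ∈ 𝒜, then λ ≤ λ* where λ* = min_{A∈𝒜} ((L₁(A)−F₁(A))/(L₂(A)+F₂(A)))⁺. -/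
/-- Binary search step (proof of Theorem 5): with
`ℒ(λ,S) = L₁(S) − F₁(S) − λ(L₂(S)+F₂(S))` and
`ℒ_κ(λ,S) = L₁(S) − κF₁(S) − λ(L₂(S)+κF₂(S))`, if `S` satisfies the
approximation guarantee `ℒ_κ(λ,S) ≤ min_{A∈𝒜} ℒ(λ,A)`, `ℒ_κ(λ,S) ≥ 0`, and
`L₂(A)+F₂(A) > 0` for all `A ∈ 𝒜`, then
`λ ≤ λ* = min_{A∈𝒜} ((L₁(A)−F₁(A))/(L₂(A)+F₂(A)))⁺`. -/
theorem lagrangian_binary_search_lower {n : ℕ}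
    (𝒜 : Finset (Finset (Fin n))) (h𝒜 : 𝒜.Nonempty) (hne : ∅ ∉ 𝒜)
    (L₁ L₂ F₁ F₂ : Finset (Fin n) → ℝ)
    (hF₁ : ∀ A : Finset (Fin n), 0 ≤ F₁ A) (hF₂ : ∀ A : Finset (Fin n), 0 ≤ F₂ A)
    (κ : ℝ) (hκ : 1 ≤ κ) (lam : ℝ) (hlam : 0 ≤ lam)
    (S : Finset (Fin n))
    (happrox : ∀ A ∈ 𝒜,
      L₁ S - κ * F₁ S - lam * (L₂ S + κ * F₂ S) ≤
        L₁ A - F₁ A - lam * (L₂ A + F₂ A))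
    (hsign : 0 ≤ L₁ S - κ * F₁ S - lam * (L₂ S + κ * F₂ S))
    (hden : ∀ A ∈ 𝒜, 0 < L₂ A + F₂ A) :
    lam ≤ 𝒜.inf' h𝒜 (fun A => max ((L₁ A - F₁ A) / (L₂ A + F₂ A)) 0) := by
  apply Finset.le_inf'
  intro A hA
  have h := happrox A hA
  have hd := hden A hA
  refine le_max_of_le_left ((le_div_iff₀ hd).mpr ?_)
  linarith
end

section
/- Let g_i : [0, r_i] → ℝ₊ for i ∈ [n] be strictly increasing continuous convex bijections onto their images with g_i(0)=0. Then the function A ↦ max { Σ_{i∈A} δ_i : δ ∈ Π_i [0, r_i], Σ_{i∈[n]} g_i(δ_i) ≤ 1 } is submodular on P([n]). -/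
/-- Key exchange lemma: from a feasible `δ` supported on `A ∪ B` and a feasible `ε`
supported on `A ∩ B`, we can construct feasible `w`, `z` with
`∑_{A∪B} δ + ∑_{A∩B} ε ≤ ∑_A w + ∑_B z`. -/
lemma key_pair {n : ℕ} (g : Fin n → ℝ → ℝ) (r : Fin n → ℝ)
    (hr : ∀ i, 0 ≤ r i)
    (hmono : ∀ i, StrictMonoOn (g i) (Set.Icc 0 (r i)))
    (hcont : ∀ i, ContinuousOn (g i) (Set.Icc 0 (r i)))
    (hconv : ∀ i, ConvexOn ℝ (Set.Icc 0 (r i)) (g i))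
    (hzero : ∀ i, g i 0 = 0)
    (hnonneg : ∀ i, ∀ x ∈ Set.Icc 0 (r i), 0 ≤ g i x)
    (A B : Finset (Fin n)) (δ ε : Fin n → ℝ)
    (hδi : ∀ i, δ i ∈ Set.Icc 0 (r i)) (hδb : ∑ i, g i (δ i) ≤ 1)
    (hεi : ∀ i, ε i ∈ Set.Icc 0 (r i)) (hεb : ∑ i, g i (ε i) ≤ 1)
    (hδ0 : ∀ i, i ∉ A ∪ B → δ i = 0) (hε0 : ∀ i, i ∉ A ∩ B → ε i = 0) :
    ∃ w z : Fin n → ℝ,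
      (∀ i, w i ∈ Set.Icc 0 (r i)) ∧ ∑ i, g i (w i) ≤ 1 ∧
      (∀ i, z i ∈ Set.Icc 0 (r i)) ∧ ∑ i, g i (z i) ≤ 1 ∧
      ∑ i ∈ A ∪ B, δ i + ∑ i ∈ A ∩ B, ε i ≤ ∑ i ∈ A, w i + ∑ i ∈ B, z i := by
  classical
  set u : Fin n → ℝ := fun i => if i ∈ A then max (δ i) (ε i) else 0 with hu_def
  set v : Fin n → ℝ := fun i => if i ∈ A then min (δ i) (ε i) else δ i with hv_def
  set u' : Fin n → ℝ := fun i => if i ∈ B then min (δ i) (ε i) else δ i with hu'_def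
  set v' : Fin n → ℝ := fun i => if i ∈ B then max (δ i) (ε i) else 0 with hv'_def
  -- memberships
  have hmax : ∀ i, max (δ i) (ε i) ∈ Set.Icc 0 (r i) := fun i =>
    ⟨le_max_of_le_left (hδi i).1, max_le (hδi i).2 (hεi i).2⟩
  have hmin : ∀ i, min (δ i) (ε i) ∈ Set.Icc 0 (r i) := fun i =>
    ⟨le_min (hδi i).1 (hεi i).1, min_le_of_left_le (hδi i).2⟩
  have h0m : ∀ i, (0 : ℝ) ∈ Set.Icc 0 (r i) := fun i => ⟨le_rfl, hr i⟩
  have hui : ∀ i, u i ∈ Set.Icc 0 (r i) := by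
    intro i; by_cases h : i ∈ A <;> simp only [hu_def, h, if_true, if_false]
    · exact hmax i
    · exact h0m i
  have hvi : ∀ i, v i ∈ Set.Icc 0 (r i) := by
    intro i; by_cases h : i ∈ A <;> simp only [hv_def, h, if_true, if_false]
    · exact hmin i
    · exact hδi i
  have hu'i : ∀ i, u' i ∈ Set.Icc 0 (r i) := by
    intro i; by_cases h : i ∈ B <;> simp only [hu'_def, h, if_true, if_false]
    · exact hmin i
    · exact hδi i
  have hv'i : ∀ i, v' i ∈ Set.Icc 0 (r i) := by
    intro i; by_cases h : i ∈ B <;> simp only [hv'_def, h, if_true, if_false]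
    · exact hmax i
    · exact h0m i
  -- pointwise sum identities
  have hεA : ∀ i, i ∉ A → ε i = 0 := fun i h => hε0 i (by simp [Finset.mem_inter, h])
  have hεB : ∀ i, i ∉ B → ε i = 0 := fun i h => hε0 i (by simp [Finset.mem_inter, h])
  have h1 : ∀ i, u i + v i = δ i + ε i := by
    intro i; by_cases h : i ∈ A <;> simp only [hu_def, hv_def, h, if_true, if_false]
    · exact max_add_min _ _
    · simp [hεA i h]
  have h1' : ∀ i, u' i + v' i = δ i + ε i := by
    intro i; by_cases h : i ∈ B <;> simp only [hu'_def, hv'_def, h, if_true, if_false]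
    · exact min_add_max _ _
    · simp [hεB i h]
  have h2 : ∀ i, g i (u i) + g i (v i) = g i (δ i) + g i (ε i) := by
    intro i; by_cases h : i ∈ A <;> simp only [hu_def, hv_def, h, if_true, if_false]
    · rcases le_total (δ i) (ε i) with h' | h'
      · rw [max_eq_right h', min_eq_left h']; ring
      · rw [max_eq_left h', min_eq_right h']
    · simp [hεA i h, hzero i]
  have h2' : ∀ i, g i (u' i) + g i (v' i) = g i (δ i) + g i (ε i) := by
    intro i; by_cases h : i ∈ B <;> simp only [hu'_def, hv'_def, h, if_true, if_false]
    · rcases le_total (δ i) (ε i) with h' | h'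
      · rw [max_eq_right h', min_eq_left h']
      · rw [max_eq_left h', min_eq_right h']; ring
    · simp [hεB i h, hzero i]
  -- pointwise comparisons
  have h3 : ∀ i, u' i ≤ δ i := by
    intro i; by_cases h : i ∈ B <;> simp only [hu'_def, h, if_true, if_false]
    · exact min_le_left _ _
    · exact le_rfl
  have h4 : ∀ i, ε i ≤ u i := by
    intro i; by_cases h : i ∈ A <;> simp only [hu_def, h, if_true, if_false]
    · exact le_max_right _ _
    · rw [hεA i h]
  -- vanishing
  have h5 : ∀ i, i ∉ A → u i = 0 ∧ u' i = 0 := by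
    intro i h
    refine ⟨by simp only [hu_def, h, if_false], ?_⟩
    by_cases hB : i ∈ B <;> simp only [hu'_def, hB, if_true, if_false]
    · rw [hεA i h]; exact min_eq_right (hδi i).1
    · exact hδ0 i (by simp [Finset.mem_union, h, hB])
  have h6 : ∀ i, i ∉ B → v i = 0 ∧ v' i = 0 := by
    intro i h
    refine ⟨?_, by simp only [hv'_def, h, if_false]⟩
    by_cases hA : i ∈ A <;> simp only [hv_def, hA, if_true, if_false]
    · rw [hεB i h]; exact min_eq_right (hδi i).1
    · exact hδ0 i (by simp [Finset.mem_union, h, hA])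
  -- global budget identities
  have hG : ∑ i, g i (u i) + ∑ i, g i (v i) = ∑ i, g i (δ i) + ∑ i, g i (ε i) := by
    rw [← Finset.sum_add_distrib, ← Finset.sum_add_distrib]
    exact Finset.sum_congr rfl fun i _ => h2 i
  have hG' : ∑ i, g i (u' i) + ∑ i, g i (v' i) = ∑ i, g i (δ i) + ∑ i, g i (ε i) := by
    rw [← Finset.sum_add_distrib, ← Finset.sum_add_distrib]
    exact Finset.sum_congr rfl fun i _ => h2' i
  have hGu' : ∑ i, g i (u' i) ≤ ∑ i, g i (δ i) :=
    Finset.sum_le_sum fun i _ => (hmono i).monotoneOn (hu'i i) (hδi i) (h3 i)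
  have hGε : ∑ i, g i (ε i) ≤ ∑ i, g i (u i) :=
    Finset.sum_le_sum fun i _ => (hmono i).monotoneOn (hεi i) (hui i) (h4 i)
  -- the interpolated family
  set W : ℝ → Fin n → ℝ := fun θ i => (1 - θ) * u i + θ * u' i with hW_def
  set Z : ℝ → Fin n → ℝ := fun θ i => (1 - θ) * v i + θ * v' i with hZ_def
  have hWmem : ∀ θ : ℝ, 0 ≤ θ → θ ≤ 1 → ∀ i, W θ i ∈ Set.Icc 0 (r i) := by
    intro θ h0 h1θ i
    have := (convex_Icc (0:ℝ) (r i)) (hui i) (hu'i i) (by linarith : (0:ℝ) ≤ 1 - θ) h0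
      (by ring)
    simpa [smul_eq_mul] using this
  have hZmem : ∀ θ : ℝ, 0 ≤ θ → θ ≤ 1 → ∀ i, Z θ i ∈ Set.Icc 0 (r i) := by
    intro θ h0 h1θ i
    have := (convex_Icc (0:ℝ) (r i)) (hvi i) (hv'i i) (by linarith : (0:ℝ) ≤ 1 - θ) h0
      (by ring)
    simpa [smul_eq_mul] using this
  have hWg : ∀ θ : ℝ, 0 ≤ θ → θ ≤ 1 →
      ∑ i, g i (W θ i) ≤ (1 - θ) * ∑ i, g i (u i) + θ * ∑ i, g i (u' i) := by
    intro θ h0 h1θ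
    rw [Finset.mul_sum, Finset.mul_sum, ← Finset.sum_add_distrib]
    refine Finset.sum_le_sum fun i _ => ?_
    have := (hconv i).2 (hui i) (hu'i i) (by linarith : (0:ℝ) ≤ 1 - θ) h0 (by ring)
    simpa [smul_eq_mul] using this
  have hZg : ∀ θ : ℝ, 0 ≤ θ → θ ≤ 1 →
      ∑ i, g i (Z θ i) ≤ (1 - θ) * ∑ i, g i (v i) + θ * ∑ i, g i (v' i) := by
    intro θ h0 h1θ
    rw [Finset.mul_sum, Finset.mul_sum, ← Finset.sum_add_distrib]
    refine Finset.sum_le_sum fun i _ => ?_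
    have := (hconv i).2 (hvi i) (hv'i i) (by linarith : (0:ℝ) ≤ 1 - θ) h0 (by ring)
    simpa [smul_eq_mul] using this
  -- value identity for the interpolated pairs
  have hval : ∀ θ : ℝ,
      ∑ i ∈ A ∪ B, δ i + ∑ i ∈ A ∩ B, ε i = ∑ i ∈ A, W θ i + ∑ i ∈ B, Z θ i := by
    intro θ
    have hWA : ∑ i ∈ A, W θ i = ∑ i ∈ A ∪ B, W θ i := by
      refine Finset.sum_subset Finset.subset_union_left fun i _ hi => ?_
      simp only [hW_def]; rw [(h5 i hi).1, (h5 i hi).2]; ring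
    have hZB : ∑ i ∈ B, Z θ i = ∑ i ∈ A ∪ B, Z θ i := by
      refine Finset.sum_subset Finset.subset_union_right fun i _ hi => ?_
      simp only [hZ_def]; rw [(h6 i hi).1, (h6 i hi).2]; ring
    have hεAB : ∑ i ∈ A ∩ B, ε i = ∑ i ∈ A ∪ B, ε i :=
      Finset.sum_subset Finset.inter_subset_union fun i _ hi => hε0 i hi
    rw [hWA, hZB, hεAB, ← Finset.sum_add_distrib, ← Finset.sum_add_distrib]
    refine Finset.sum_congr rfl fun i _ => ?_
    have e3 : W θ i + Z θ i = (1-θ)*(u i + v i) + θ*(u' i + v' i) := by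
      simp only [hW_def, hZ_def]; ring
    rw [e3, h1 i, h1' i]; ring
  -- find a suitable θ
  have hfinish : ∀ θ : ℝ, 0 ≤ θ → θ ≤ 1 → ∑ i, g i (W θ i) ≤ 1 → ∑ i, g i (Z θ i) ≤ 1 →
      ∃ w z : Fin n → ℝ,
      (∀ i, w i ∈ Set.Icc 0 (r i)) ∧ ∑ i, g i (w i) ≤ 1 ∧
      (∀ i, z i ∈ Set.Icc 0 (r i)) ∧ ∑ i, g i (z i) ≤ 1 ∧
      ∑ i ∈ A ∪ B, δ i + ∑ i ∈ A ∩ B, ε i ≤ ∑ i ∈ A, w i + ∑ i ∈ B, z i := by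
    intro θ h0 h1θ hw hz
    exact ⟨W θ, Z θ, hWmem θ h0 h1θ, hw, hZmem θ h0 h1θ, hz, (hval θ).le⟩
  by_cases hcase : ∑ i, g i (u i) ≤ 1
  · -- θ = 0 works
    have hW0 : W 0 = u := by funext i; simp only [hW_def]; ring
    have hZ0 : Z 0 = v := by funext i; simp only [hZ_def]; ring
    obtain ⟨w, z, hw1, hw2, hz1, hz2, hle⟩ :=
      hfinish 0 le_rfl zero_le_one (by rw [hW0]; exact hcase)
        (by rw [hZ0]; linarith)
    exact ⟨w, z, hw1, hw2, hz1, hz2, hle⟩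
  · -- intermediate value theorem
    push_neg at hcase
    set φ : ℝ → ℝ := fun θ => ∑ i, g i (W θ i) with hφ_def
    have hφcont : ContinuousOn φ (Set.Icc 0 1) := by
      apply continuousOn_finset_sum
      intro i _
      have hin : Continuous fun θ : ℝ => (1 - θ) * u i + θ * u' i :=
        ((continuous_const.sub continuous_id).mul continuous_const).add
          (continuous_id.mul continuous_const)
      exact (hcont i).comp hin.continuousOn fun θ hθ => hWmem θ hθ.1 hθ.2 i
    have hφ1 : φ 1 ≤ 1 := by
      have : φ 1 = ∑ i, g i (u' i) := by
        refine Finset.sum_congr rfl fun i _ => ?_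
        rw [hW_def]; norm_num
      rw [this]; linarith
    have hφ0 : 1 ≤ φ 0 := by
      have : φ 0 = ∑ i, g i (u i) := by
        refine Finset.sum_congr rfl fun i _ => ?_
        rw [hW_def]; norm_num
      rw [this]; linarith
    have h1mem : (1:ℝ) ∈ Set.Icc (φ 1) (φ 0) := ⟨hφ1, hφ0⟩
    obtain ⟨θ, hθmem, hφθ⟩ := intermediate_value_Icc' zero_le_one hφcont h1mem
    have hw : ∑ i, g i (W θ i) = 1 := hφθ
    have hz : ∑ i, g i (Z θ i) ≤ 1 := by
      have h1 := hWg θ hθmem.1 hθmem.2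
      have h2 := hZg θ hθmem.1 hθmem.2
      nlinarith [hG, hG', hδb, hεb]
    obtain ⟨w, z, hw1, hw2, hz1, hz2, hle⟩ :=
      hfinish θ hθmem.1 hθmem.2 hw.le hz
    exact ⟨w, z, hw1, hw2, hz1, hz2, hle⟩

/-- Theorem 1 (case `p = 1`) of the paper: for strictly increasing continuous
convex functions `g_i : [0, r_i] → ℝ₊` with `g_i(0) = 0`, the set function
`A ↦ max { ∑_{i∈A} δ_i : δ ∈ Π_i [0, r_i], ∑_i g_i(δ_i) ≤ 1 }` is submodular. -/
theorem exploration_bonus_submodular {n : ℕ} (g : Fin n → ℝ → ℝ) (r : Fin n → ℝ)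
    (hr : ∀ i, 0 ≤ r i)
    (hmono : ∀ i, StrictMonoOn (g i) (Set.Icc 0 (r i)))
    (hcont : ∀ i, ContinuousOn (g i) (Set.Icc 0 (r i)))
    (hconv : ∀ i, ConvexOn ℝ (Set.Icc 0 (r i)) (g i))
    (hzero : ∀ i, g i 0 = 0)
    (hnonneg : ∀ i, ∀ x ∈ Set.Icc 0 (r i), 0 ≤ g i x) :
    Submodular (fun A : Finset (Fin n) =>
      sSup ((fun δ : Fin n → ℝ => ∑ i ∈ A, δ i) ''
        {δ | (∀ i, δ i ∈ Set.Icc 0 (r i)) ∧ ∑ i, g i (δ i) ≤ 1})) := by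
  classical
  intro A B
  simp only
  set S : Set (Fin n → ℝ) := {δ | (∀ i, δ i ∈ Set.Icc 0 (r i)) ∧ ∑ i, g i (δ i) ≤ 1}
    with hS_def
  have hSne : S.Nonempty := by
    refine ⟨fun _ => 0, fun i => ⟨le_rfl, hr i⟩, ?_⟩
    simp [hzero]
  have hne : ∀ C : Finset (Fin n), ((fun δ : Fin n → ℝ => ∑ i ∈ C, δ i) '' S).Nonempty :=
    fun C => hSne.image _
  have hbdd : ∀ C : Finset (Fin n), BddAbove ((fun δ : Fin n → ℝ => ∑ i ∈ C, δ i) '' S) := by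
    intro C
    refine ⟨∑ i ∈ C, r i, ?_⟩
    rintro x ⟨δ, hδ, rfl⟩
    exact Finset.sum_le_sum fun i _ => (hδ.1 i).2
  refine le_of_forall_pos_le_add ?_
  intro η hη
  obtain ⟨x, ⟨δ₀, hδ₀S, rfl⟩, hxlt⟩ := exists_lt_of_lt_csSup (hne (A ∪ B))
    (show sSup ((fun δ : Fin n → ℝ => ∑ i ∈ A ∪ B, δ i) '' S) - η/2 < _ from
      sub_lt_self _ (by positivity))
  obtain ⟨y, ⟨ε₀, hε₀S, rfl⟩, hylt⟩ := exists_lt_of_lt_csSup (hne (A ∩ B))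
    (show sSup ((fun δ : Fin n → ℝ => ∑ i ∈ A ∩ B, δ i) '' S) - η/2 < _ from
      sub_lt_self _ (by positivity))
  -- restrict δ₀ to A ∪ B and ε₀ to A ∩ B
  have hrestrict : ∀ (C : Finset (Fin n)) (d : Fin n → ℝ), d ∈ S →
      ((fun i => if i ∈ C then d i else 0) ∈ S ∧
       ∑ i ∈ C, (if i ∈ C then d i else 0) = ∑ i ∈ C, d i) := by
    intro C d hd
    refine ⟨⟨?_, ?_⟩, ?_⟩
    · intro i
      by_cases h : i ∈ C
      · simpa [h] using hd.1 i
      · simp only [h, if_false]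
        exact ⟨le_rfl, hr i⟩
    · refine le_trans (Finset.sum_le_sum fun i _ => ?_) hd.2
      by_cases h : i ∈ C
      · simp [h]
      · simp only [h, if_false, hzero i]
        exact hnonneg i _ (hd.1 i)
    · exact Finset.sum_congr rfl fun i hi => if_pos hi
  obtain ⟨hδS, hδsum⟩ := hrestrict (A ∪ B) δ₀ hδ₀S
  obtain ⟨hεS, hεsum⟩ := hrestrict (A ∩ B) ε₀ hε₀S
  set δ : Fin n → ℝ := fun i => if i ∈ A ∪ B then δ₀ i else 0 with hδ_def
  set ε : Fin n → ℝ := fun i => if i ∈ A ∩ B then ε₀ i else 0 with hε_def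
  obtain ⟨w, z, hw1, hw2, hz1, hz2, hle⟩ := key_pair g r hr hmono hcont hconv hzero hnonneg
    A B δ ε hδS.1 hδS.2 hεS.1 hεS.2
    (fun i hi => by simp only [hδ_def]; exact if_neg hi)
    (fun i hi => by simp only [hε_def]; exact if_neg hi)
  have hwS : ∑ i ∈ A, w i ≤ sSup ((fun δ : Fin n → ℝ => ∑ i ∈ A, δ i) '' S) :=
    le_csSup (hbdd A) ⟨w, ⟨hw1, hw2⟩, rfl⟩
  have hzS : ∑ i ∈ B, z i ≤ sSup ((fun δ : Fin n → ℝ => ∑ i ∈ B, δ i) '' S) :=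
    le_csSup (hbdd B) ⟨z, ⟨hz1, hz2⟩, rfl⟩
  have e1 : ∑ i ∈ A ∪ B, δ i = ∑ i ∈ A ∪ B, δ₀ i := hδsum
  have e2 : ∑ i ∈ A ∩ B, ε i = ∑ i ∈ A ∩ B, ε₀ i := hεsum
  linarith
end

section
/- Let P = {δ ∈ ℝ₊ⁿ : Σ_{i∈A} δ_i ≤ f(A) for all A ⊆ [n]} be a polymatroid for a non-decreasing submodular normalized f, and let h_1,…,h_n : ℝ₊ → ℝ be concave non-decreasing with h_i(0) ≥ 0. Then G(A) = max_{δ∈P} Σ_{i∈A} h_i(δ_i) is a submodular set function of A. -/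
open Finset

namespace PCMS

variable {n : ℕ}


variable {n : ℕ}

lemma sum_subset_le {z : Fin n → ℝ} (hz : ∀ i, 0 ≤ z i) {S T : Finset (Fin n)}
    (h : S ⊆ T) : ∑ i ∈ S, z i ≤ ∑ i ∈ T, z i :=
  Finset.sum_le_sum_of_subset_of_nonneg h (fun i _ _ => hz i)

lemma sum_cover_le {z : Fin n → ℝ} (hz : ∀ i, 0 ≤ z i) {S T1 T2 : Finset (Fin n)}
    (h : S ⊆ T1 ∪ T2) : ∑ i ∈ S, z i ≤ ∑ i ∈ T1, z i + ∑ i ∈ T2, z i := by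
  calc ∑ i ∈ S, z i ≤ ∑ i ∈ T1 ∪ T2, z i := sum_subset_le hz h
    _ = ∑ i ∈ T1, z i + ∑ i ∈ T2 \ T1, z i := by
        rw [← Finset.sum_union (Finset.disjoint_sdiff)]
        congr 1
        rw [Finset.union_sdiff_self_eq_union]
    _ ≤ _ := by
        have := sum_subset_le hz (Finset.sdiff_subset (s := T2) (t := T1))
        linarith

/-- the contracted rank function -/
noncomputable def gam (f : Finset (Fin n) → ℝ) (m : Fin n → ℝ) (S : Finset (Fin n)) : ℝ :=
  ((univ.powerset.filter (fun T => S ⊆ T)).inf'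
    ⟨univ, by simp⟩ (fun T => f T - ∑ i ∈ T, m i))

lemma gam_le (f : Finset (Fin n) → ℝ) (m : Fin n → ℝ) {S T : Finset (Fin n)} (hT : S ⊆ T) :
    gam f m S ≤ f T - ∑ i ∈ T, m i :=
  Finset.inf'_le _ (by simp [hT])

lemma gam_exists (f : Finset (Fin n) → ℝ) (m : Fin n → ℝ) (S : Finset (Fin n)) :
    ∃ T, S ⊆ T ∧ gam f m S = f T - ∑ i ∈ T, m i := by
  obtain ⟨T, hT, hEq⟩ := Finset.exists_mem_eq_inf' (⟨univ, by simp⟩ :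
    (univ.powerset.filter (fun T => S ⊆ T)).Nonempty) (fun T => f T - ∑ i ∈ T, m i)
  exact ⟨T, (Finset.mem_filter.1 hT).2, hEq⟩

lemma gam_mono (f : Finset (Fin n) → ℝ) (m : Fin n → ℝ) {S S' : Finset (Fin n)} (h : S ⊆ S') :
    gam f m S ≤ gam f m S' := by
  obtain ⟨T, hT, hEq⟩ := gam_exists f m S'
  rw [hEq]; exact gam_le f m (h.trans hT)

lemma gam_nonneg {f : Finset (Fin n) → ℝ} {m : Fin n → ℝ}
    (hmf : ∀ T, ∑ i ∈ T, m i ≤ f T) (S : Finset (Fin n)) : 0 ≤ gam f m S := by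
  apply Finset.le_inf'
  intro T _
  have := hmf T; linarith

lemma gam_empty {f : Finset (Fin n) → ℝ} {m : Fin n → ℝ} (hfnorm : f ∅ = 0)
    (hmf : ∀ T, ∑ i ∈ T, m i ≤ f T) : gam f m ∅ = 0 := by
  have h1 := gam_le f m (Finset.empty_subset ∅)
  have h2 := gam_nonneg hmf (∅ : Finset (Fin n))
  simp [hfnorm] at h1
  linarith

lemma gam_submod {f : Finset (Fin n) → ℝ} (hf : Submodular f) (m : Fin n → ℝ)
    (S1 S2 : Finset (Fin n)) :
    gam f m (S1 ∪ S2) + gam f m (S1 ∩ S2) ≤ gam f m S1 + gam f m S2 := by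
  obtain ⟨T1, hT1, e1⟩ := gam_exists f m S1
  obtain ⟨T2, hT2, e2⟩ := gam_exists f m S2
  have l1 : gam f m (S1 ∪ S2) ≤ f (T1 ∪ T2) - ∑ i ∈ T1 ∪ T2, m i :=
    gam_le f m (Finset.union_subset_union hT1 hT2)
  have l2 : gam f m (S1 ∩ S2) ≤ f (T1 ∩ T2) - ∑ i ∈ T1 ∩ T2, m i :=
    gam_le f m (Finset.inter_subset_inter hT1 hT2)
  have hsum : ∑ i ∈ T1 ∪ T2, m i + ∑ i ∈ T1 ∩ T2, m i = ∑ i ∈ T1, m i + ∑ i ∈ T2, m i :=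
    Finset.sum_union_inter
  have := hf T1 T2
  rw [e1, e2]; linarith


noncomputable def bet (f : Finset (Fin n) → ℝ) (m d : Fin n → ℝ) (S : Finset (Fin n)) : ℝ :=
  (S.powerset.inf' ⟨∅, by simp⟩ (fun R => gam f m R + ∑ i ∈ S \ R, d i))

section
variable {f : Finset (Fin n) → ℝ} {m d : Fin n → ℝ}

lemma bet_le {S R : Finset (Fin n)} (hR : R ⊆ S) :
    bet f m d S ≤ gam f m R + ∑ i ∈ S \ R, d i :=
  Finset.inf'_le _ (by simp [hR])

lemma bet_exists (S : Finset (Fin n)) :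
    ∃ R, R ⊆ S ∧ bet f m d S = gam f m R + ∑ i ∈ S \ R, d i := by
  obtain ⟨R, hR, hEq⟩ := Finset.exists_mem_eq_inf' (⟨∅, by simp⟩ : (S.powerset).Nonempty)
    (fun R => gam f m R + ∑ i ∈ S \ R, d i)
  exact ⟨R, Finset.mem_powerset.1 hR, hEq⟩

lemma bet_le_gam (S : Finset (Fin n)) : bet f m d S ≤ gam f m S := by
  have := bet_le (f := f) (m := m) (d := d) (Finset.Subset.refl S)
  simpa using this

lemma bet_le_d (hfnorm : f ∅ = 0) (hmf : ∀ T, ∑ i ∈ T, m i ≤ f T) (S : Finset (Fin n)) :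
    bet f m d S ≤ ∑ i ∈ S, d i := by
  have := bet_le (f := f) (m := m) (d := d) (Finset.empty_subset S)
  rw [gam_empty hfnorm hmf] at this
  simpa using this

lemma bet_nonneg (hmf : ∀ T, ∑ i ∈ T, m i ≤ f T) (hd : ∀ i, 0 ≤ d i) (S : Finset (Fin n)) :
    0 ≤ bet f m d S := by
  apply Finset.le_inf'
  intro R _
  have h1 := gam_nonneg (f := f) (m := m) hmf R
  have h2 : (0:ℝ) ≤ ∑ i ∈ S \ R, d i := Finset.sum_nonneg fun i _ => hd i
  linarith

lemma bet_empty (hfnorm : f ∅ = 0) (hmf : ∀ T, ∑ i ∈ T, m i ≤ f T) (hd : ∀ i, 0 ≤ d i) :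
    bet f m d ∅ = 0 :=
  le_antisymm (by simpa using bet_le_d (d := d) hfnorm hmf ∅) (bet_nonneg hmf hd ∅)

lemma bet_mono (hd : ∀ i, 0 ≤ d i) {S S' : Finset (Fin n)} (h : S ⊆ S') :
    bet f m d S ≤ bet f m d S' := by
  obtain ⟨R, hR, hEq⟩ := bet_exists (f := f) (m := m) (d := d) S'
  rw [hEq]
  calc bet f m d S ≤ gam f m (R ∩ S) + ∑ i ∈ S \ (R ∩ S), d i :=
        bet_le (Finset.inter_subset_right)
    _ ≤ gam f m R + ∑ i ∈ S' \ R, d i := by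
        have h1 := gam_mono f m (Finset.inter_subset_left : R ∩ S ⊆ R)
        have h2 : S \ (R ∩ S) ⊆ S' \ R := by
          intro i hi
          simp only [Finset.mem_sdiff, Finset.mem_inter] at hi ⊢
          exact ⟨h hi.1, fun hr => hi.2 ⟨hr, hi.1⟩⟩
        have h3 := sum_subset_le hd h2
        linarith

lemma bet_submod (hf : Submodular f) (hd : ∀ i, 0 ≤ d i) (S1 S2 : Finset (Fin n)) :
    bet f m d (S1 ∪ S2) + bet f m d (S1 ∩ S2) ≤ bet f m d S1 + bet f m d S2 := by
  obtain ⟨R1, hR1, e1⟩ := bet_exists (f := f) (m := m) (d := d) S1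
  obtain ⟨R2, hR2, e2⟩ := bet_exists (f := f) (m := m) (d := d) S2
  have l1 : bet f m d (S1 ∪ S2) ≤ gam f m (R1 ∪ R2) + ∑ i ∈ (S1 ∪ S2) \ (R1 ∪ R2), d i :=
    bet_le (Finset.union_subset_union hR1 hR2)
  have l2 : bet f m d (S1 ∩ S2) ≤ gam f m (R1 ∩ R2) + ∑ i ∈ (S1 ∩ S2) \ (R1 ∩ R2), d i :=
    bet_le (Finset.inter_subset_inter hR1 hR2)
  have hg := gam_submod hf m R1 R2
  have hdsum : ∑ i ∈ (S1 ∪ S2) \ (R1 ∪ R2), d i + ∑ i ∈ (S1 ∩ S2) \ (R1 ∩ R2), d i ≤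
      ∑ i ∈ S1 \ R1, d i + ∑ i ∈ S2 \ R2, d i := by
    have key : ∀ i : Fin n,
        (if i ∈ (S1 ∪ S2) \ (R1 ∪ R2) then d i else 0) +
        (if i ∈ (S1 ∩ S2) \ (R1 ∩ R2) then d i else 0) ≤
        (if i ∈ S1 \ R1 then d i else 0) + (if i ∈ S2 \ R2 then d i else 0) := by
      intro i
      have hdi := hd i
      by_cases h1 : i ∈ S1 <;> by_cases h2 : i ∈ S2 <;>
        by_cases h3 : i ∈ R1 <;> by_cases h4 : i ∈ R2 <;>
        simp only [Finset.mem_sdiff, Finset.mem_union, Finset.mem_inter, h1, h2, h3, h4] <;>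
        simp_all
    calc ∑ i ∈ (S1 ∪ S2) \ (R1 ∪ R2), d i + ∑ i ∈ (S1 ∩ S2) \ (R1 ∩ R2), d i
        = ∑ i : Fin n, ((if i ∈ (S1 ∪ S2) \ (R1 ∪ R2) then d i else 0) +
            (if i ∈ (S1 ∩ S2) \ (R1 ∩ R2) then d i else 0)) := by
          rw [Finset.sum_add_distrib]
          congr 1 <;> rw [Finset.sum_ite_mem] <;> simp [Finset.univ_inter, Finset.inter_comm]
      _ ≤ ∑ i : Fin n, ((if i ∈ S1 \ R1 then d i else 0) + (if i ∈ S2 \ R2 then d i else 0)) :=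
          Finset.sum_le_sum (fun i _ => key i)
      _ = ∑ i ∈ S1 \ R1, d i + ∑ i ∈ S2 \ R2, d i := by
          rw [Finset.sum_add_distrib]
          congr 1 <;> rw [Finset.sum_ite_mem] <;> simp [Finset.univ_inter, Finset.inter_comm]
  rw [e1, e2]; linarith

end

def Qset (σ : Equiv.Perm (Fin n)) (k : ℕ) : Finset (Fin n) :=
  univ.filter (fun i => (σ.symm i : ℕ) < k)

noncomputable def gvec (β : Finset (Fin n) → ℝ) (σ : Equiv.Perm (Fin n)) : Fin n → ℝ :=
  fun i => β (Qset σ ((σ.symm i : ℕ) + 1)) - β (Qset σ (σ.symm i))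

lemma Qset_zero (σ : Equiv.Perm (Fin n)) : Qset σ 0 = ∅ := by
  simp [Qset]

lemma Qset_mono (σ : Equiv.Perm (Fin n)) {k k' : ℕ} (h : k ≤ k') : Qset σ k ⊆ Qset σ k' := by
  intro i hi
  simp only [Qset, Finset.mem_filter, Finset.mem_univ, true_and] at hi ⊢
  omega

lemma Qset_big (σ : Equiv.Perm (Fin n)) {k : ℕ} (h : n ≤ k) : Qset σ k = univ := by
  ext i; simp only [Qset, Finset.mem_filter, Finset.mem_univ, true_and, iff_true]
  exact lt_of_lt_of_le (σ.symm i).2 h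

lemma Qset_succ (σ : Equiv.Perm (Fin n)) {k : ℕ} (hk : k < n) :
    Qset σ (k + 1) = insert (σ ⟨k, hk⟩) (Qset σ k) := by
  ext i
  simp only [Qset, Finset.mem_filter, Finset.mem_univ, true_and, Finset.mem_insert]
  constructor
  · intro hi
    rcases Nat.lt_succ_iff_lt_or_eq.1 hi with h | h
    · exact Or.inr h
    · left
      have : σ.symm i = ⟨k, hk⟩ := Fin.ext h
      rw [← this, Equiv.apply_symm_apply]
  · rintro (h | h)
    · rw [h, Equiv.symm_apply_apply]; exact Nat.lt_succ_self k
    · omega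

lemma Qset_notMem (σ : Equiv.Perm (Fin n)) {k : ℕ} (hk : k < n) :
    σ ⟨k, hk⟩ ∉ Qset σ k := by
  simp [Qset]

section
variable (β : Finset (Fin n) → ℝ) (σ : Equiv.Perm (Fin n))
variable {hmono : Unit}

lemma gvec_nonneg (hmono : ∀ ⦃S T : Finset (Fin n)⦄, S ⊆ T → β S ≤ β T) : ∀ i, 0 ≤ gvec β σ i := by
  intro i
  have := hmono (Qset_mono σ (Nat.le_succ (σ.symm i : ℕ)))
  simp only [gvec]; linarith

lemma gvec_sum_Q (h0 : β ∅ = 0) : ∀ k, ∑ i ∈ Qset σ k, gvec β σ i = β (Qset σ k) := by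
  intro k
  induction k with
  | zero => simp [Qset_zero, h0]
  | succ k ih =>
    by_cases hk : k < n
    · rw [Qset_succ σ hk, Finset.sum_insert (Qset_notMem σ hk), ih]
      have : gvec β σ (σ ⟨k, hk⟩) = β (Qset σ (k+1)) - β (Qset σ k) := by
        simp only [gvec, Equiv.symm_apply_apply]
      rw [this, Qset_succ σ hk]; ring
    · have h1 : Qset σ (k+1) = Qset σ k := by
        rw [Qset_big σ (by omega), Qset_big σ (by omega)]
      rw [h1, ih]

lemma gvec_le_aux (hmono : ∀ ⦃S T : Finset (Fin n)⦄, S ⊆ T → β S ≤ β T)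
    (hsub : Submodular β) (h0 : β ∅ = 0) : ∀ k, ∀ S ⊆ Qset σ k, ∑ i ∈ S, gvec β σ i ≤ β S := by
  intro k
  induction k with
  | zero =>
    intro S hS
    rw [Qset_zero] at hS
    rw [Finset.subset_empty.1 hS]
    simp [h0]
  | succ k ih =>
    intro S hS
    by_cases hk : k < n
    · rw [Qset_succ σ hk] at hS
      set e := σ ⟨k, hk⟩ with he
      by_cases heS : e ∈ S
      · have hS' : S.erase e ⊆ Qset σ k := by
          intro i hi
          rcases Finset.mem_insert.1 (hS (Finset.erase_subset _ _ hi)) with h | h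
          · exact absurd h (Finset.ne_of_mem_erase hi)
          · exact h
        have hrw : S = insert e (S.erase e) := (Finset.insert_erase heS).symm
        have hsum : ∑ i ∈ S, gvec β σ i = gvec β σ e + ∑ i ∈ S.erase e, gvec β σ i := by
          rw [← Finset.sum_erase_add S _ heS]; ring
        have hge : gvec β σ e = β (Qset σ (k+1)) - β (Qset σ k) := by
          simp only [gvec, he, Equiv.symm_apply_apply]
        have hih := ih (S.erase e) hS'
        -- submodularity : β (S ∪ Qset σ k) + β (S ∩ Qset σ k) ≤ β S + β (Qset σ k)
        have hu : S ∪ Qset σ k = Qset σ (k+1) := by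
          rw [Qset_succ σ hk]
          apply Finset.Subset.antisymm
          · exact Finset.union_subset hS (Finset.subset_insert _ _)
          · apply Finset.insert_subset
            · exact Finset.mem_union_left _ heS
            · exact Finset.subset_union_right
        have hi2 : S ∩ Qset σ k = S.erase e := by
          ext i
          simp only [Finset.mem_inter, Finset.mem_erase]
          constructor
          · intro ⟨h1, h2⟩
            refine ⟨?_, h1⟩
            rintro rfl
            exact Qset_notMem σ hk h2
          · intro ⟨h1, h2⟩
            refine ⟨h2, ?_⟩
            rcases Finset.mem_insert.1 (hS h2) with h | h
            · exact absurd h h1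
            · exact h
        have hsb := hsub S (Qset σ k)
        rw [hu, hi2] at hsb
        linarith
      · exact ih S (fun i hi => by
          rcases Finset.mem_insert.1 (hS hi) with h | h
          · exact absurd (h ▸ hi) heS
          · exact h)
    · have h1 : Qset σ (k+1) = Qset σ k := by
        rw [Qset_big σ (by omega), Qset_big σ (by omega)]
      exact ih S (h1 ▸ hS)

lemma gvec_le (hmono : ∀ ⦃S T : Finset (Fin n)⦄, S ⊆ T → β S ≤ β T)
    (hsub : Submodular β) (h0 : β ∅ = 0) (S : Finset (Fin n)) : ∑ i ∈ S, gvec β σ i ≤ β S :=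
  gvec_le_aux β σ hmono hsub h0 n S (by rw [Qset_big σ (le_refl n)]; exact Finset.subset_univ S)

end

section Exchange

variable (f : Finset (Fin n) → ℝ) (A B : Finset (Fin n)) (x y : Fin n → ℝ)

def Lv : Fin n → ℝ := fun i => if i ∈ A ∩ B then min (x i) (y i) else 0
def dv : Fin n → ℝ := fun i => if i ∈ A ∩ B then max (x i) (y i) - min (x i) (y i) else 0
def m1v : Fin n → ℝ := fun i => (if i ∈ A \ B then x i else 0) + Lv A B x y i
def m2v : Fin n → ℝ := fun i => (if i ∈ B \ A then x i else 0) + Lv A B x y i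

variable {f A B x y}
lemma Lv_nonneg (hx0 : ∀ i, 0 ≤ x i) (hy0 : ∀ i, 0 ≤ y i) : ∀ i, 0 ≤ Lv A B x y i := by
  intro i; unfold Lv; split
  · exact le_min (hx0 i) (hy0 i)
  · exact le_refl 0

lemma Lv_le_x (hx0 : ∀ i, 0 ≤ x i) : ∀ i, Lv A B x y i ≤ x i := by
  intro i; unfold Lv; split
  · exact min_le_left _ _
  · exact hx0 i

lemma Lv_le_y (hy0 : ∀ i, 0 ≤ y i) : ∀ i, Lv A B x y i ≤ y i := by
  intro i; unfold Lv; split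
  · exact min_le_right _ _
  · exact hy0 i

lemma dv_nonneg : ∀ i, 0 ≤ dv A B x y i := by
  intro i; unfold dv; split
  · have := min_le_max (a := x i) (b := y i); linarith
  · exact le_refl 0

lemma m1v_nonneg (hx0 : ∀ i, 0 ≤ x i) (hy0 : ∀ i, 0 ≤ y i) : ∀ i, 0 ≤ m1v A B x y i := by
  intro i; unfold m1v
  have := Lv_nonneg hx0 hy0 (A := A) (B := B) i
  split <;> [skip; skip] <;> first
    | (have := hx0 i; linarith)
    | linarith

lemma m1v_le_x (hx0 : ∀ i, 0 ≤ x i) : ∀ i, m1v A B x y i ≤ x i := by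
  intro i; unfold m1v
  have h1 := Lv_le_x hx0 (y := y) (A := A) (B := B) i
  by_cases h : i ∈ A \ B
  · simp only [h, if_true]
    have : Lv A B x y i = 0 := by
      unfold Lv
      have : i ∉ A ∩ B := by
        intro hc
        simp only [Finset.mem_sdiff] at h
        exact h.2 (Finset.mem_inter.1 hc).2
      simp [this]
    linarith
  · simp only [h, if_false]; linarith

lemma m2v_nonneg (hx0 : ∀ i, 0 ≤ x i) (hy0 : ∀ i, 0 ≤ y i) : ∀ i, 0 ≤ m2v A B x y i := by
  intro i; unfold m2v
  have := Lv_nonneg hx0 hy0 (A := A) (B := B) i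
  split <;> first
    | (have := hx0 i; linarith)
    | linarith

lemma m2v_le_x (hx0 : ∀ i, 0 ≤ x i) : ∀ i, m2v A B x y i ≤ x i := by
  intro i; unfold m2v
  have h1 := Lv_le_x hx0 (y := y) (A := A) (B := B) i
  by_cases h : i ∈ B \ A
  · simp only [h, if_true]
    have : Lv A B x y i = 0 := by
      unfold Lv
      have : i ∉ A ∩ B := by
        intro hc
        simp only [Finset.mem_sdiff] at h
        exact h.2 (Finset.mem_inter.1 hc).1
      simp [this]
    linarith
  · simp only [h, if_false]; linarith

lemma m1v_f (hx0 : ∀ i, 0 ≤ x i) (hxf : ∀ S, ∑ i ∈ S, x i ≤ f S) : ∀ S, ∑ i ∈ S, m1v A B x y i ≤ f S := fun S =>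
  le_trans (Finset.sum_le_sum fun i _ => m1v_le_x hx0 i) (hxf S)

lemma m2v_f (hx0 : ∀ i, 0 ≤ x i) (hxf : ∀ S, ∑ i ∈ S, x i ≤ f S) : ∀ S, ∑ i ∈ S, m2v A B x y i ≤ f S := fun S =>
  le_trans (Finset.sum_le_sum fun i _ => m2v_le_x hx0 i) (hxf S)


-- the KEY inequality: d(S) ≤ β1(S) + β2(S)
lemma key_ineq (hf : Submodular f)
    (hx0 : ∀ i, 0 ≤ x i) (hxf : ∀ S, ∑ i ∈ S, x i ≤ f S)
    (hy0 : ∀ i, 0 ≤ y i) (hyf : ∀ S, ∑ i ∈ S, y i ≤ f S)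
    (S : Finset (Fin n)) :
    ∑ i ∈ S, dv A B x y i ≤
      bet f (m1v A B x y) (dv A B x y) S + bet f (m2v A B x y) (dv A B x y) S := by
  set L := Lv A B x y with hL
  set d := dv A B x y with hd
  set m1 := m1v A B x y with hm1
  set m2 := m2v A B x y with hm2
  have hd0 : ∀ i, 0 ≤ d i := dv_nonneg
  have hL0 : ∀ i, 0 ≤ L i := Lv_nonneg hx0 hy0
  have hLx : ∀ i, L i ≤ x i := Lv_le_x hx0
  have hLy : ∀ i, L i ≤ y i := Lv_le_y hy0
  -- reduce to S ⊆ A ∩ B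
  have hred : ∑ i ∈ S, d i = ∑ i ∈ S ∩ (A ∩ B), d i := by
    rw [← Finset.sum_filter_add_sum_filter_not S (fun i => i ∈ A ∩ B),
      Finset.filter_mem_eq_inter]
    have h2 : ∑ i ∈ S.filter (fun i => ¬ i ∈ A ∩ B), d i = 0 := by
      apply Finset.sum_eq_zero
      intro i hi
      have := (Finset.mem_filter.1 hi).2
      simp only [hd, dv, this, if_false]
    rw [h2, add_zero]
  rw [hred]
  have hb1 := bet_mono (f := f) (m := m1) hd0 (Finset.inter_subset_left (s₁ := S) (s₂ := A ∩ B))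
  have hb2 := bet_mono (f := f) (m := m2) hd0 (Finset.inter_subset_left (s₁ := S) (s₂ := A ∩ B))
  have main : ∀ S' : Finset (Fin n), S' ⊆ A ∩ B →
      ∑ i ∈ S', d i ≤ bet f m1 d S' + bet f m2 d S' := by
    intro S' hS'
    obtain ⟨R1, hR1, e1⟩ := bet_exists (f := f) (m := m1) (d := d) S'
    obtain ⟨R2, hR2, e2⟩ := bet_exists (f := f) (m := m2) (d := d) S'
    obtain ⟨T1, hT1, g1⟩ := gam_exists f m1 R1
    obtain ⟨T2, hT2, g2⟩ := gam_exists f m2 R2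
    rw [e1, e2, g1, g2]
    set R := R1 ∩ R2 with hR
    set U := T1 ∪ T2 with hU
    -- step A : cover
    have stepA : ∑ i ∈ S', d i ≤
        ∑ i ∈ S' \ R1, d i + ∑ i ∈ S' \ R2, d i + ∑ i ∈ R, d i := by
      have c1 : S' ⊆ (S' \ R1) ∪ ((S' \ R2) ∪ R) := by
        intro i hi
        simp only [Finset.mem_union, Finset.mem_sdiff, hR, Finset.mem_inter]
        by_cases h1 : i ∈ R1
        · by_cases h2 : i ∈ R2
          · exact Or.inr (Or.inr ⟨h1, h2⟩)
          · exact Or.inr (Or.inl ⟨hi, h2⟩)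
        · exact Or.inl ⟨hi, h1⟩
      have c2 := sum_cover_le hd0 c1
      have c3 := sum_cover_le hd0 (Finset.Subset.refl ((S' \ R2) ∪ R)) (z := d)
      linarith
    have hRC : R ⊆ A ∩ B := fun i hi => hS' (hR1 (Finset.mem_inter.1 hi).1)
    have hRT : R ⊆ T1 ∩ T2 := Finset.inter_subset_inter hT1 hT2
    have hRU : R ⊆ U := hRT.trans (Finset.inter_subset_union)
    -- step B : identity on R
    have stepB : ∑ i ∈ R, d i = ∑ i ∈ R, x i + ∑ i ∈ R, y i - 2 * ∑ i ∈ R, L i := by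
      have : ∀ i ∈ R, d i = x i + y i - 2 * L i := by
        intro i hi
        have hiC := hRC hi
        simp only [hd, dv, hL, Lv, hiC, if_true]
        have := max_add_min (x i) (y i)
        linarith
      rw [Finset.sum_congr rfl this]
      rw [Finset.sum_sub_distrib, Finset.sum_add_distrib, ← Finset.mul_sum]
    -- auxiliary vectors
    set xAB1 : Fin n → ℝ := fun i => if i ∈ A \ B then x i else 0 with hxAB1
    set xAB2 : Fin n → ℝ := fun i => if i ∈ B \ A then x i else 0 with hxAB2
    set xC : Fin n → ℝ := fun i => if i ∈ A ∩ B then x i else 0 with hxC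
    have hxAB1nn : ∀ i, 0 ≤ xAB1 i := by
      intro i; simp only [hxAB1]; split <;> [exact hx0 i; exact le_refl 0]
    have hxAB2nn : ∀ i, 0 ≤ xAB2 i := by
      intro i; simp only [hxAB2]; split <;> [exact hx0 i; exact le_refl 0]
    have hm1split : ∑ i ∈ T1, m1 i = ∑ i ∈ T1, xAB1 i + ∑ i ∈ T1, L i := by
      rw [← Finset.sum_add_distrib]; rfl
    have hm2split : ∑ i ∈ T2, m2 i = ∑ i ∈ T2, xAB2 i + ∑ i ∈ T2, L i := by
      rw [← Finset.sum_add_distrib]; rfl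
    have hLsplit : ∑ i ∈ T1, L i + ∑ i ∈ T2, L i = ∑ i ∈ U, L i + ∑ i ∈ T1 ∩ T2, L i :=
      (Finset.sum_union_inter).symm
    -- sdiff identities
    have sd1 : ∑ i ∈ U \ R, L i + ∑ i ∈ R, L i = ∑ i ∈ U, L i := Finset.sum_sdiff hRU
    have sd2 : ∑ i ∈ (T1 ∩ T2) \ R, L i + ∑ i ∈ R, L i = ∑ i ∈ T1 ∩ T2, L i :=
      Finset.sum_sdiff hRT
    -- claim 2
    have claim2 : ∑ i ∈ T1 ∩ T2, L i - ∑ i ∈ R, L i + ∑ i ∈ R, y i ≤ f (T1 ∩ T2) := by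
      have e1' : ∑ i ∈ T1 ∩ T2, L i - ∑ i ∈ R, L i = ∑ i ∈ (T1 ∩ T2) \ R, L i := by
        linarith
      have e2' : ∑ i ∈ (T1 ∩ T2) \ R, L i ≤ ∑ i ∈ (T1 ∩ T2) \ R, y i :=
        Finset.sum_le_sum (fun i _ => hLy i)
      have e3' : ∑ i ∈ (T1 ∩ T2) \ R, y i + ∑ i ∈ R, y i = ∑ i ∈ T1 ∩ T2, y i :=
        Finset.sum_sdiff hRT
      have := hyf (T1 ∩ T2)
      linarith
    -- claim 1
    have claim1 : ∑ i ∈ T1, xAB1 i + ∑ i ∈ T2, xAB2 i +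
        (∑ i ∈ U, L i - ∑ i ∈ R, L i) + ∑ i ∈ R, x i ≤ f U := by
      have e1' : ∑ i ∈ U, L i - ∑ i ∈ R, L i = ∑ i ∈ U \ R, L i := by linarith
      have e2' : ∑ i ∈ U \ R, L i ≤ ∑ i ∈ U \ R, xC i := by
        apply Finset.sum_le_sum
        intro i _
        simp only [hL, Lv, hxC]
        split
        · exact min_le_left _ _
        · exact le_refl 0
      have e3' : ∑ i ∈ R, x i = ∑ i ∈ R, xC i := by
        apply Finset.sum_congr rfl
        intro i hi
        simp only [hxC, hRC hi, if_true]
      have e4' : ∑ i ∈ U \ R, xC i + ∑ i ∈ R, xC i = ∑ i ∈ U, xC i := Finset.sum_sdiff hRU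
      have e5' : ∑ i ∈ T1, xAB1 i ≤ ∑ i ∈ U, xAB1 i :=
        sum_subset_le hxAB1nn (Finset.subset_union_left)
      have e6' : ∑ i ∈ T2, xAB2 i ≤ ∑ i ∈ U, xAB2 i :=
        sum_subset_le hxAB2nn (Finset.subset_union_right)
      have e7' : ∑ i ∈ U, xAB1 i + ∑ i ∈ U, xAB2 i + ∑ i ∈ U, xC i ≤ ∑ i ∈ U, x i := by
        rw [← Finset.sum_add_distrib, ← Finset.sum_add_distrib]
        apply Finset.sum_le_sum
        intro i _
        simp only [hxAB1, hxAB2, hxC]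
        by_cases hiA : i ∈ A <;> by_cases hiB : i ∈ B <;>
          simp [Finset.mem_sdiff, Finset.mem_inter, hiA, hiB, hx0 i]
      have := hxf U
      linarith
    have hsubf := hf T1 T2
    linarith
  calc ∑ i ∈ S ∩ (A ∩ B), d i ≤ bet f m1 d (S ∩ (A ∩ B)) + bet f m2 d (S ∩ (A ∩ B)) :=
        main _ (Finset.inter_subset_right)
    _ ≤ _ := by linarith

end Exchange

section Split

variable {β1 β2 : Finset (Fin n) → ℝ} {dvec : Fin n → ℝ}

def Kset (β : Finset (Fin n) → ℝ) : Set (Fin n → ℝ) :=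
  {s | (∀ i, 0 ≤ s i) ∧ ∀ S : Finset (Fin n), ∑ i ∈ S, s i ≤ β S}

lemma Kset_convex (β : Finset (Fin n) → ℝ) : Convex ℝ (Kset β) := by
  rintro s ⟨hs0, hsS⟩ t ⟨ht0, htS⟩ a b ha hb hab
  constructor
  · intro i
    have : (a • s + b • t) i = a * s i + b * t i := by simp
    rw [this]
    have := mul_nonneg ha (hs0 i)
    have := mul_nonneg hb (ht0 i)
    linarith
  · intro S
    have hsum : ∑ i ∈ S, (a • s + b • t) i = a * ∑ i ∈ S, s i + b * ∑ i ∈ S, t i := by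
      rw [Finset.mul_sum, Finset.mul_sum, ← Finset.sum_add_distrib]
      apply Finset.sum_congr rfl
      intro i _; simp
    rw [hsum]
    have h1 := mul_le_mul_of_nonneg_left (hsS S) ha
    have h2 := mul_le_mul_of_nonneg_left (htS S) hb
    calc a * ∑ i ∈ S, s i + b * ∑ i ∈ S, t i ≤ a * β S + b * β S := by linarith
      _ = β S := by rw [← add_mul, hab, one_mul]

lemma Kset_closed (β : Finset (Fin n) → ℝ) : IsClosed (Kset β) := by
  have : Kset β = (⋂ i, {s : Fin n → ℝ | 0 ≤ s i}) ∩
      (⋂ S : Finset (Fin n), {s : Fin n → ℝ | ∑ i ∈ S, s i ≤ β S}) := by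
    ext s
    simp only [Kset, Set.mem_inter_iff, Set.mem_iInter, Set.mem_setOf_eq]
  rw [this]
  exact IsClosed.inter
    (isClosed_iInter fun i => isClosed_le continuous_const (continuous_apply i))
    (isClosed_iInter fun S => isClosed_le
      (continuous_finset_sum S (fun i _ => continuous_apply i)) continuous_const)

lemma Kset_compact (β : Finset (Fin n) → ℝ) : IsCompact (Kset β) := by
  apply Metric.isCompact_of_isClosed_isBounded (Kset_closed β)
  set R : ℝ := ∑ j : Fin n, |β {j}| with hR
  have hR0 : 0 ≤ R := Finset.sum_nonneg fun j _ => abs_nonneg _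
  apply Bornology.IsBounded.subset (Metric.isBounded_closedBall (x := (0 : Fin n → ℝ)) (r := R))
  intro s hs
  rw [Metric.mem_closedBall, dist_zero_right]
  rw [pi_norm_le_iff_of_nonneg hR0]
  intro i
  rw [Real.norm_eq_abs, abs_of_nonneg (hs.1 i)]
  have h1 : s i ≤ β {i} := by
    have := hs.2 {i}
    simpa using this
  have h2 : β {i} ≤ |β {i}| := le_abs_self _
  have h3 : |β {i}| ≤ R := by
    rw [hR]
    exact Finset.single_le_sum (fun j _ => abs_nonneg (β {j})) (Finset.mem_univ i)
  linarith

lemma Kset_zero_mem (β : Finset (Fin n) → ℝ) (hβ0 : ∀ S, 0 ≤ β S) : (0 : Fin n → ℝ) ∈ Kset β := by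
  constructor
  · intro i; exact le_refl 0
  · intro S; simpa using hβ0 S

theorem split_exists
    (hmono1 : ∀ ⦃S T : Finset (Fin n)⦄, S ⊆ T → β1 S ≤ β1 T)
    (hmono2 : ∀ ⦃S T : Finset (Fin n)⦄, S ⊆ T → β2 S ≤ β2 T)
    (hsub1 : Submodular β1) (hsub2 : Submodular β2)
    (h01 : β1 ∅ = 0) (h02 : β2 ∅ = 0)
    (hkey : ∀ S : Finset (Fin n), ∑ i ∈ S, dvec i ≤ β1 S + β2 S)
    (hd0 : ∀ i, 0 ≤ dvec i) :
    ∃ s, s ∈ Kset β1 ∧ (dvec - s) ∈ Kset β2 := by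
  by_contra hcon
  push_neg at hcon
  -- the two sets are disjoint
  have hdisj : Disjoint (Kset β1) ((fun t => dvec - t) '' (Kset β2)) := by
    rw [Set.disjoint_left]
    rintro s hs ⟨t, ht, hEq⟩
    have : dvec - s = t := by rw [← hEq]; simp
    exact hcon s hs (this ▸ ht)
  have himg_compact : IsCompact ((fun t => dvec - t) '' (Kset β2)) :=
    (Kset_compact β2).image (continuous_const.sub continuous_id)
  have himg_convex : Convex ℝ ((fun t => dvec - t) '' (Kset β2)) := by
    rintro _ ⟨t1, ht1, rfl⟩ _ ⟨t2, ht2, rfl⟩ a b ha hb hab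
    refine ⟨a • t1 + b • t2, Kset_convex β2 ht1 ht2 ha hb hab, ?_⟩
    funext i
    simp only [Pi.add_apply, Pi.sub_apply, Pi.smul_apply, smul_eq_mul]
    linear_combination (-dvec i) * hab
  obtain ⟨φ, u, v, hu, huv, hv⟩ := geometric_hahn_banach_compact_closed
    (Kset_convex β1) (Kset_compact β1) himg_convex himg_compact.isClosed hdisj
  -- the weight vector
  set w : Fin n → ℝ := fun i => φ (fun j => if i = j then (1:ℝ) else 0) with hw
  have hφ : ∀ z : Fin n → ℝ, φ z = ∑ i : Fin n, z i * w i := by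
    intro z
    conv_lhs => rw [pi_eq_sum_univ z]
    rw [map_sum]
    apply Finset.sum_congr rfl
    intro i _
    rw [map_smul]
    simp [hw]
  set w' : Fin n → ℝ := fun i => max (w i) 0 with hw'
  have hw'0 : ∀ i, 0 ≤ w' i := fun i => le_max_right _ _
  -- sorting permutation
  set σ : Equiv.Perm (Fin n) := Tuple.sort (fun i => -(w' i)) with hσ
  have hsort : Monotone ((fun i => -(w' i)) ∘ σ) := Tuple.monotone_sort _
  set g1 := gvec β1 σ with hg1
  set g2 := gvec β2 σ with hg2
  have hg1S : ∀ S, ∑ i ∈ S, g1 i ≤ β1 S := gvec_le β1 σ hmono1 hsub1 h01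
  have hg2S : ∀ S, ∑ i ∈ S, g2 i ≤ β2 S := gvec_le β2 σ hmono2 hsub2 h02
  have hg1nn : ∀ i, 0 ≤ g1 i := gvec_nonneg β1 σ hmono1
  have hg2nn : ∀ i, 0 ≤ g2 i := gvec_nonneg β2 σ hmono2
  -- truncated vectors
  set g1t : Fin n → ℝ := fun i => if 0 ≤ w i then g1 i else 0 with hg1t
  set g2t : Fin n → ℝ := fun i => if 0 ≤ w i then g2 i else 0 with hg2t
  have hmemK : ∀ (g : Fin n → ℝ) (β : Finset (Fin n) → ℝ),
      (∀ i, 0 ≤ g i) → (∀ S, ∑ i ∈ S, g i ≤ β S) →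
      (∀ ⦃S T : Finset (Fin n)⦄, S ⊆ T → β S ≤ β T) →
      (fun i => if 0 ≤ w i then g i else 0) ∈ Kset β := by
    intro g β hg hgS hβm
    constructor
    · intro i; dsimp only; split
      · exact hg i
      · exact le_refl 0
    · intro S
      have : ∑ i ∈ S, (if 0 ≤ w i then g i else 0) = ∑ i ∈ S.filter (fun i => 0 ≤ w i), g i :=
        (Finset.sum_filter _ _).symm
      rw [this]
      exact le_trans (hgS _) (hβm (Finset.filter_subset _ _))
  have hg1tK : g1t ∈ Kset β1 := hmemK g1 β1 hg1nn hg1S hmono1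
  have hg2tK : g2t ∈ Kset β2 := hmemK g2 β2 hg2nn hg2S hmono2
  -- separation inequalities
  have h1 : φ g1t < u := hu g1t hg1tK
  have h2 : v < φ (dvec - g2t) := hv _ ⟨g2t, hg2tK, rfl⟩
  have h3 : φ (dvec - g2t) = φ dvec - φ g2t := by rw [map_sub]
  -- rewrite with w'
  have e1 : φ g1t = ∑ i : Fin n, w' i * g1 i := by
    rw [hφ]
    apply Finset.sum_congr rfl
    intro i _
    by_cases h : 0 ≤ w i
    · simp only [hg1t, hw', h, if_true]
      rw [max_eq_left h, mul_comm]
    · simp only [hg1t, hw', h, if_false]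
      rw [zero_mul, max_eq_right (le_of_not_ge h), zero_mul]
  have e2 : φ g2t = ∑ i : Fin n, w' i * g2 i := by
    rw [hφ]
    apply Finset.sum_congr rfl
    intro i _
    by_cases h : 0 ≤ w i
    · simp only [hg2t, hw', h, if_true]
      rw [max_eq_left h, mul_comm]
    · simp only [hg2t, hw', h, if_false]
      rw [zero_mul, max_eq_right (le_of_not_ge h), zero_mul]
  have e3 : φ dvec ≤ ∑ i : Fin n, w' i * dvec i := by
    rw [hφ]
    apply Finset.sum_le_sum
    intro i _
    rw [mul_comm]
    exact mul_le_mul_of_nonneg_right (le_max_left _ _) (hd0 i)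
  -- the strict inequality
  have hstrict : ∑ i : Fin n, w' i * g1 i + ∑ i : Fin n, w' i * g2 i <
      ∑ i : Fin n, w' i * dvec i := by
    rw [← e1, ← e2]
    have := h3
    linarith
  -- Abel summation contradiction
  -- a : the sorted weights
  set a : ℕ → ℝ := fun k => if h : k < n then w' (σ ⟨k, h⟩) else 0 with ha
  have ha0 : ∀ k, 0 ≤ a k := by
    intro k; rw [ha]; dsimp only; split
    · exact hw'0 _
    · exact le_refl 0
  have haanti : ∀ j k : ℕ, j ≤ k → a k ≤ a j := by
    intro j k hjk
    rw [ha]; dsimp only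
    split <;> split
    · rename_i hk hj
      have : (⟨j, hj⟩ : Fin n) ≤ ⟨k, hk⟩ := Fin.mk_le_mk.2 hjk
      have := hsort this
      simp only [Function.comp_apply] at this
      linarith
    · rename_i hk hj; omega
    · rename_i hk hj; exact hw'0 _
    · exact le_refl 0
  -- prefix sums
  set D : ℕ → ℝ := fun k => ∑ i ∈ Qset σ k, (g1 i + g2 i - dvec i) with hD
  have hD0 : ∀ k, 0 ≤ D k := by
    intro k
    rw [hD]; dsimp only
    have hsplit : ∑ i ∈ Qset σ k, (g1 i + g2 i - dvec i) =
        ∑ i ∈ Qset σ k, g1 i + ∑ i ∈ Qset σ k, g2 i - ∑ i ∈ Qset σ k, dvec i := by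
      rw [Finset.sum_sub_distrib, Finset.sum_add_distrib]
    rw [hsplit, gvec_sum_Q β1 σ h01, gvec_sum_Q β2 σ h02]
    have := hkey (Qset σ k)
    linarith
  have hDzero : D 0 = 0 := by rw [hD]; simp [Qset_zero]
  set zz : ℕ → ℝ := fun k => if h : k < n then
      (g1 (σ ⟨k, h⟩) + g2 (σ ⟨k, h⟩) - dvec (σ ⟨k, h⟩)) else 0 with hzz
  have hDstep : ∀ k, D (k + 1) = D k + zz k := by
    intro k
    by_cases hk : k < n
    · rw [hD, hzz]; dsimp only
      rw [Qset_succ σ hk, Finset.sum_insert (Qset_notMem σ hk), dif_pos hk]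
      ring
    · rw [hD, hzz]; dsimp only
      rw [dif_neg hk]
      have : Qset σ (k+1) = Qset σ k := by
        rw [Qset_big σ (by omega), Qset_big σ (by omega)]
      rw [this]; ring
  have habel : ∀ m : ℕ, a m * D m ≤ ∑ j ∈ Finset.range m, a j * zz j := by
    intro m
    induction m with
    | zero => simp [hDzero]
    | succ m ih =>
      rw [Finset.sum_range_succ, hDstep m]
      have h4 : a (m+1) * (D m + zz m) ≤ a m * (D m + zz m) := by
        apply mul_le_mul_of_nonneg_right (haanti m (m+1) (Nat.le_succ m))
        have := hD0 (m+1)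
        rw [hDstep m] at this
        exact this
      have h5 : a m * (D m + zz m) = a m * D m + a m * zz m := by ring
      linarith
  have hfinal : 0 ≤ ∑ i : Fin n, w' i * (g1 i + g2 i - dvec i) := by
    have hconv : ∑ i : Fin n, w' i * (g1 i + g2 i - dvec i) =
        ∑ j ∈ Finset.range n, a j * zz j := by
      rw [← Equiv.sum_comp σ (fun i => w' i * (g1 i + g2 i - dvec i))]
      rw [← Fin.sum_univ_eq_sum_range (fun j => a j * zz j) n]
      apply Finset.sum_congr rfl
      intro k _
      rw [ha, hzz]; dsimp only
      rw [dif_pos k.2, dif_pos k.2]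
    rw [hconv]
    have := habel n
    have han : a n = 0 := by rw [ha]; simp
    rw [han, zero_mul] at this
    exact this
  have hexp : ∑ i : Fin n, w' i * (g1 i + g2 i - dvec i) =
      ∑ i : Fin n, w' i * g1 i + ∑ i : Fin n, w' i * g2 i - ∑ i : Fin n, w' i * dvec i := by
    rw [← Finset.sum_add_distrib, ← Finset.sum_sub_distrib]
    apply Finset.sum_congr rfl
    intro i _; ring
  rw [hexp] at hfinal
  linarith

end Split

section Assemble

-- feasibility upper bound from bet
lemma bet_plus_m {f : Finset (Fin n) → ℝ} {m d : Fin n → ℝ} (S : Finset (Fin n)) :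
    bet f m d S + ∑ i ∈ S, m i ≤ f S := by
  have h1 := bet_le_gam (f := f) (m := m) (d := d) S
  have h2 := gam_le f m (Finset.Subset.refl S)
  linarith

/-- The main exchange lemma. -/
lemma exchange {f : Finset (Fin n) → ℝ} (hf : Submodular f)
    (hfnorm : f ∅ = 0) (A B : Finset (Fin n)) {x y : Fin n → ℝ}
    (hx0 : ∀ i, 0 ≤ x i) (hxf : ∀ S, ∑ i ∈ S, x i ≤ f S)
    (hy0 : ∀ i, 0 ≤ y i) (hyf : ∀ S, ∑ i ∈ S, y i ≤ f S) :
    ∃ u v : Fin n → ℝ,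
      (∀ i, 0 ≤ u i) ∧ (∀ S, ∑ i ∈ S, u i ≤ f S) ∧
      (∀ i, 0 ≤ v i) ∧ (∀ S, ∑ i ∈ S, v i ≤ f S) ∧
      (∀ i ∈ A \ B, u i = x i) ∧ (∀ i ∈ B \ A, v i = x i) ∧
      (∀ i ∈ A ∩ B, u i + v i = x i + y i ∧
        min (x i) (y i) ≤ u i ∧ u i ≤ max (x i) (y i)) := by
  set L := Lv A B x y with hL
  set d := dv A B x y with hd
  set m1 := m1v A B x y with hm1
  set m2 := m2v A B x y with hm2
  have hd0 : ∀ i, 0 ≤ d i := dv_nonneg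
  have hm1f : ∀ S, ∑ i ∈ S, m1 i ≤ f S := m1v_f hx0 hxf
  have hm2f : ∀ S, ∑ i ∈ S, m2 i ≤ f S := m2v_f hx0 hxf
  obtain ⟨s, hs1, hs2⟩ := split_exists (β1 := bet f m1 d) (β2 := bet f m2 d) (dvec := d)
    (fun S T hST => bet_mono hd0 hST) (fun S T hST => bet_mono hd0 hST)
    (bet_submod hf hd0) (bet_submod hf hd0)
    (bet_empty hfnorm hm1f hd0) (bet_empty hfnorm hm2f hd0)
    (key_ineq hf hx0 hxf hy0 hyf) hd0
  obtain ⟨hs0, hsS⟩ := hs1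
  obtain ⟨ht0', htS⟩ := hs2
  have ht0 : ∀ i, s i ≤ d i := by
    intro i
    have := ht0' i
    simp only [Pi.sub_apply] at this
    linarith
  refine ⟨fun i => m1 i + s i, fun i => m2 i + (d i - s i), ?_, ?_, ?_, ?_, ?_, ?_, ?_⟩
  · intro i
    have h1 := m1v_nonneg hx0 hy0 (A := A) (B := B) i
    rw [← hm1] at h1
    have h2 := hs0 i
    show 0 ≤ m1 i + s i
    linarith
  · intro S
    rw [Finset.sum_add_distrib]
    have := bet_plus_m (f := f) (m := m1) (d := d) S
    have := hsS S
    linarith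
  · intro i
    have h1 := m2v_nonneg hx0 hy0 (A := A) (B := B) i
    rw [← hm2] at h1
    have h2 := ht0' i
    simp only [Pi.sub_apply] at h2
    show 0 ≤ m2 i + (d i - s i)
    linarith
  · intro S
    rw [Finset.sum_add_distrib]
    have h1 := bet_plus_m (f := f) (m := m2) (d := d) S
    have h2 := htS S
    have h3 : ∑ i ∈ S, (d i - s i) = ∑ i ∈ S, (d - s) i := by
      apply Finset.sum_congr rfl; intro i _; simp
    rw [h3]
    linarith
  · -- u = x on A \ B
    intro i hi
    have hiC : i ∉ A ∩ B := by
      simp only [Finset.mem_sdiff] at hi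
      simp only [Finset.mem_inter]
      tauto
    have hdi : d i = 0 := by rw [hd]; simp only [dv, hiC, if_false]
    have hsi : s i = 0 := le_antisymm (by rw [← hdi]; exact ht0 i) (hs0 i)
    have hLi : L i = 0 := by rw [hL]; simp only [Lv, hiC, if_false]
    rw [hm1]; simp only [m1v, hi, if_true]
    rw [← hL, hLi, hsi]; ring
  · -- v = x on B \ A
    intro i hi
    have hiC : i ∉ A ∩ B := by
      simp only [Finset.mem_sdiff] at hi
      simp only [Finset.mem_inter]
      tauto
    have hdi : d i = 0 := by rw [hd]; simp only [dv, hiC, if_false]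
    have hsi : s i = 0 := le_antisymm (by rw [← hdi]; exact ht0 i) (hs0 i)
    have hLi : L i = 0 := by rw [hL]; simp only [Lv, hiC, if_false]
    rw [hm2]; simp only [m2v, hi, if_true]
    rw [← hL, hLi, hsi, hdi]; ring
  · -- on A ∩ B
    intro i hi
    have hiAB : i ∉ A \ B := by
      simp only [Finset.mem_inter] at hi
      simp only [Finset.mem_sdiff]
      tauto
    have hiBA : i ∉ B \ A := by
      simp only [Finset.mem_inter] at hi
      simp only [Finset.mem_sdiff]
      tauto
    have hm1i : m1 i = L i := by
      rw [hm1, hL]; simp only [m1v, hiAB, if_false]; ring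
    have hm2i : m2 i = L i := by
      rw [hm2, hL]; simp only [m2v, hiBA, if_false]; ring
    have hLi : L i = min (x i) (y i) := by rw [hL]; simp only [Lv, hi, if_true]
    have hdi : d i = max (x i) (y i) - min (x i) (y i) := by
      rw [hd]; simp only [dv, hi, if_true]
    have hmm := max_add_min (x i) (y i)
    refine ⟨?_, ?_, ?_⟩
    · show m1 i + s i + (m2 i + (d i - s i)) = x i + y i
      rw [hm1i, hm2i, hLi, hdi]; linarith
    · show min (x i) (y i) ≤ m1 i + s i
      rw [hm1i, hLi]; have := hs0 i; linarith
    · show m1 i + s i ≤ max (x i) (y i)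
      rw [hm1i, hLi]
      have := ht0 i
      rw [hdi] at this
      linarith

/-- pairwise concavity exchange -/
lemma concave_pair {φ : ℝ → ℝ} (hc : ConcaveOn ℝ (Set.Ici 0) φ) {a b p : ℝ}
    (ha : 0 ≤ a) (hb : 0 ≤ b) (h1 : min a b ≤ p) (h2 : p ≤ max a b) :
    φ a + φ b ≤ φ p + φ (a + b - p) := by
  have aux : ∀ a b p : ℝ, 0 ≤ a → 0 ≤ b → a ≤ b → a ≤ p → p ≤ b →
      φ a + φ b ≤ φ p + φ (a + b - p) := by
    intro a b p ha hb hab hap hpb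
    rcases eq_or_lt_of_le hab with heq | hlt
    · have hpa : p = a := le_antisymm (heq ▸ hpb) hap
      rw [hpa]
      have hr : a + b - a = b := by ring
      rw [hr]
    · set t : ℝ := (b - p) / (b - a) with hts
      have hba : (0:ℝ) < b - a := by linarith
      have ht0 : 0 ≤ t := div_nonneg (by linarith) hba.le
      have ht1 : t ≤ 1 := by rw [hts, div_le_one hba]; linarith
      have h' : t * (b - a) = b - p := div_mul_cancel₀ _ (ne_of_gt hba)
      have hp : t * a + (1 - t) * b = p := by linear_combination -h'
      have hq : (1 - t) * a + t * b = a + b - p := by linear_combination h'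
      have c1 := hc.2 (Set.mem_Ici.2 ha) (Set.mem_Ici.2 hb) ht0
        (by linarith : (0:ℝ) ≤ 1 - t) (by ring)
      have c2 := hc.2 (Set.mem_Ici.2 ha) (Set.mem_Ici.2 hb)
        (by linarith : (0:ℝ) ≤ 1 - t) ht0 (by ring)
      simp only [smul_eq_mul] at c1 c2
      rw [hp] at c1
      rw [hq] at c2
      linarith
  rcases le_total a b with hab | hba
  · rw [min_eq_left hab] at h1
    rw [max_eq_right hab] at h2
    exact aux a b p ha hb hab h1 h2
  · rw [min_eq_right hba] at h1
    rw [max_eq_left hba] at h2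
    have := aux b a p hb ha hba h1 h2
    have hcomm : a + b - p = b + a - p := by ring
    rw [hcomm]
    linarith

end Assemble

end PCMS

open PCMS in
/-- Theorem 3 of He, Zhang, Zhang (2012): for a polymatroid
`P = {δ ∈ ℝ₊ⁿ : ∑_{i∈A} δ_i ≤ f(A) ∀A}` with `f` normalized non-decreasing
submodular, and concave non-decreasing `h_i : ℝ₊ → ℝ` with `h_i(0) ≥ 0`, the
function `G(A) = max_{δ∈P} ∑_{i∈A} h_i(δ_i)` is submodular. -/
theorem polymatroid_concave_max_submodular {n : ℕ}
    (f : Finset (Fin n) → ℝ) (hf : Submodular f)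
    (hfmono : ∀ A B : Finset (Fin n), A ⊆ B → f A ≤ f B) (hfnorm : f ∅ = 0)
    (h : Fin n → ℝ → ℝ)
    (hconc : ∀ i, ConcaveOn ℝ (Set.Ici 0) (h i))
    (hmono : ∀ i, MonotoneOn (h i) (Set.Ici 0))
    (h0 : ∀ i, 0 ≤ h i 0) :
    Submodular (fun A : Finset (Fin n) =>
      sSup ((fun δ : Fin n → ℝ => ∑ i ∈ A, h i (δ i)) ''
        {δ | (∀ i, 0 ≤ δ i) ∧
          ∀ B : Finset (Fin n), ∑ i ∈ B, δ i ≤ f B})) := by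
  intro A B
  dsimp only
  set P : Set (Fin n → ℝ) := {δ | (∀ i, 0 ≤ δ i) ∧
      ∀ B : Finset (Fin n), ∑ i ∈ B, δ i ≤ f B} with hP
  have hf0 : ∀ S : Finset (Fin n), 0 ≤ f S := by
    intro S
    have := hfmono ∅ S (Finset.empty_subset S)
    rw [hfnorm] at this
    exact this
  have hzero : (fun _ => (0:ℝ)) ∈ P := by
    constructor
    · intro i; exact le_refl 0
    · intro S; simpa using hf0 S
  have hne : ∀ U : Finset (Fin n),
      ((fun δ : Fin n → ℝ => ∑ i ∈ U, h i (δ i)) '' P).Nonempty :=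
    fun U => ⟨_, ⟨_, hzero, rfl⟩⟩
  have hub : ∀ (U : Finset (Fin n)) (δ : Fin n → ℝ), δ ∈ P →
      ∑ i ∈ U, h i (δ i) ≤ ∑ i ∈ U, h i (f {i}) := by
    intro U δ hδ
    apply Finset.sum_le_sum
    intro i _
    have hδi : δ i ≤ f {i} := by
      have := hδ.2 {i}
      simpa using this
    exact hmono i (Set.mem_Ici.2 (hδ.1 i)) (Set.mem_Ici.2 (hf0 {i})) hδi
  have hbdd : ∀ U : Finset (Fin n),
      BddAbove ((fun δ : Fin n → ℝ => ∑ i ∈ U, h i (δ i)) '' P) := by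
    intro U
    refine ⟨∑ i ∈ U, h i (f {i}), ?_⟩
    rintro _ ⟨δ, hδ, rfl⟩
    exact hub U δ hδ
  -- the key pointwise bound
  have key : ∀ xv ∈ (fun δ : Fin n → ℝ => ∑ i ∈ A ∪ B, h i (δ i)) '' P,
      ∀ yv ∈ (fun δ : Fin n → ℝ => ∑ i ∈ A ∩ B, h i (δ i)) '' P,
      xv + yv ≤ sSup ((fun δ : Fin n → ℝ => ∑ i ∈ A, h i (δ i)) '' P) +
        sSup ((fun δ : Fin n → ℝ => ∑ i ∈ B, h i (δ i)) '' P) := by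
    rintro _ ⟨x, hx, rfl⟩ _ ⟨y, hy, rfl⟩
    obtain ⟨u, v, hu0, huf, hv0, hvf, huAB, hvBA, hint⟩ :=
      PCMS.exchange hf hfnorm A B hx.1 hx.2 hy.1 hy.2
    have humem : u ∈ P := ⟨hu0, huf⟩
    have hvmem : v ∈ P := ⟨hv0, hvf⟩
    -- sum decompositions
    have hdecA : ∑ i ∈ A \ B, h i (u i) + ∑ i ∈ A ∩ B, h i (u i) =
        ∑ i ∈ A, h i (u i) := by
      have := Finset.sum_sdiff (f := fun i => h i (u i))
        (Finset.inter_subset_left : A ∩ B ⊆ A)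
      rwa [Finset.sdiff_inter_self_left] at this
    have hBsd : B \ (A ∩ B) = B \ A := by
      ext i; simp only [Finset.mem_sdiff, Finset.mem_inter]; tauto
    have hdecB : ∑ i ∈ B \ A, h i (v i) + ∑ i ∈ A ∩ B, h i (v i) =
        ∑ i ∈ B, h i (v i) := by
      have := Finset.sum_sdiff (f := fun i => h i (v i))
        (Finset.inter_subset_right : A ∩ B ⊆ B)
      rwa [hBsd] at this
    have hdecU : ∑ i ∈ A ∪ B, h i (x i) =
        ∑ i ∈ A \ B, h i (x i) + (∑ i ∈ B \ A, h i (x i) + ∑ i ∈ A ∩ B, h i (x i)) := by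
      have h1 : A ∪ B = (A \ B) ∪ B := by
        ext i; simp only [Finset.mem_union, Finset.mem_sdiff]; tauto
      have h2 : Disjoint (A \ B) B := Finset.sdiff_disjoint
      rw [h1, Finset.sum_union h2]
      congr 1
      have := Finset.sum_sdiff (f := fun i => h i (x i))
        (Finset.inter_subset_right : A ∩ B ⊆ B)
      rw [hBsd] at this
      linarith
    -- equalities on the differences
    have e1 : ∑ i ∈ A \ B, h i (x i) = ∑ i ∈ A \ B, h i (u i) :=
      Finset.sum_congr rfl (fun i hi => by rw [huAB i hi])
    have e2 : ∑ i ∈ B \ A, h i (x i) = ∑ i ∈ B \ A, h i (v i) :=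
      Finset.sum_congr rfl (fun i hi => by rw [hvBA i hi])
    -- concavity on the intersection
    have e3 : ∑ i ∈ A ∩ B, h i (x i) + ∑ i ∈ A ∩ B, h i (y i) ≤
        ∑ i ∈ A ∩ B, h i (u i) + ∑ i ∈ A ∩ B, h i (v i) := by
      rw [← Finset.sum_add_distrib, ← Finset.sum_add_distrib]
      apply Finset.sum_le_sum
      intro i hi
      obtain ⟨hsum, hmin, hmax⟩ := hint i hi
      have := PCMS.concave_pair (hconc i) (hx.1 i) (hy.1 i) hmin hmax
      have hvi : x i + y i - u i = v i := by linarith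
      rw [hvi] at this
      exact this
    have hle1 : ∑ i ∈ A, h i (u i) ≤
        sSup ((fun δ : Fin n → ℝ => ∑ i ∈ A, h i (δ i)) '' P) :=
      le_csSup (hbdd A) ⟨u, humem, rfl⟩
    have hle2 : ∑ i ∈ B, h i (v i) ≤
        sSup ((fun δ : Fin n → ℝ => ∑ i ∈ B, h i (δ i)) '' P) :=
      le_csSup (hbdd B) ⟨v, hvmem, rfl⟩
    linarith
  have h1 : sSup ((fun δ : Fin n → ℝ => ∑ i ∈ A ∪ B, h i (δ i)) '' P) ≤
      sSup ((fun δ : Fin n → ℝ => ∑ i ∈ A, h i (δ i)) '' P) +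
      sSup ((fun δ : Fin n → ℝ => ∑ i ∈ B, h i (δ i)) '' P) -
      sSup ((fun δ : Fin n → ℝ => ∑ i ∈ A ∩ B, h i (δ i)) '' P) := by
    apply csSup_le (hne _)
    intro xv hxv
    have h2 : sSup ((fun δ : Fin n → ℝ => ∑ i ∈ A ∩ B, h i (δ i)) '' P) ≤
        sSup ((fun δ : Fin n → ℝ => ∑ i ∈ A, h i (δ i)) '' P) +
        sSup ((fun δ : Fin n → ℝ => ∑ i ∈ B, h i (δ i)) '' P) - xv := by
      apply csSup_le (hne _)
      intro yv hyv
      have := key xv hxv yv hyv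
      linarith
    linarith
  linarith
end

section
/- Under a high-probability event where μ* ∈ C_t and with a κ-approximation of the bilinear objective (max over μ ∈ C_t, A ∈ 𝒜 of e_A^T μ), the selected action A_t satisfies Δ(A_t) ≤ (κ+1)·max_{δ ∈ C_t − \hat{μ}_{t−1}} Σ_{i∈A_t} |δ_i| + (κ−1)·Σ_{i∈A_t} \hat{μ}_{i,t−1}, where Δ(A) = Σ_{i∈A*} μ*_i − Σ_{i∈A} μ*_i and A* maximizes e_A^T μ* over 𝒜. -/
/-- Regret decomposition under a κ-approximation (display (2)-(4) of the
paper): under the event `μ* ∈ C_t`, with `A*` an optimal action, `C_t⁺ = C_t ∩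
{μ ≥ μ̂_{t−1}}`, maxima `M₁ = max_{μ∈C_t} e_{A*}^T μ = max_{μ∈C_t⁺} e_{A*}^T μ`,
`M₂ = max_{μ∈C_t⁺} e_{A_t}^T μ`, `Mabs = max_{δ∈C_t−μ̂} ∑_{i∈A_t} |δ_i|`, and
the approximation guarantee `M₁ ≤ κ M₂`, the selected action satisfies
`Δ(A_t) ≤ (κ+1) Mabs + (κ−1) e_{A_t}^T μ̂_{t−1}`. -/
theorem regret_kappa_approx {n : ℕ}
    (𝒜 : Finset (Finset (Fin n))) (Ct : Set (Fin n → ℝ))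
    (μstar hatμ : Fin n → ℝ) (hμ : μstar ∈ Ct)
    (Astar At : Finset (Fin n)) (hAstar : Astar ∈ 𝒜) (hAt : At ∈ 𝒜)
    (hopt : ∀ A ∈ 𝒜, ∑ i ∈ A, μstar i ≤ ∑ i ∈ Astar, μstar i)
    (κ : ℝ) (hκ : 1 ≤ κ) (M₁ M₂ Mabs : ℝ)
    (hM₁ : IsGreatest ((fun μ : Fin n → ℝ => ∑ i ∈ Astar, μ i) '' Ct) M₁)
    (hM₁' : IsGreatest ((fun μ : Fin n → ℝ => ∑ i ∈ Astar, μ i) ''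
      (Ct ∩ {μ | ∀ i, hatμ i ≤ μ i})) M₁)
    (hM₂ : IsGreatest ((fun μ : Fin n → ℝ => ∑ i ∈ At, μ i) ''
      (Ct ∩ {μ | ∀ i, hatμ i ≤ μ i})) M₂)
    (hMabs : IsGreatest ((fun μ : Fin n → ℝ => ∑ i ∈ At, |μ i - hatμ i|) '' Ct)
      Mabs)
    (happrox : M₁ ≤ κ * M₂) :
    (∑ i ∈ Astar, μstar i) - (∑ i ∈ At, μstar i) ≤
      (κ + 1) * Mabs + (κ - 1) * ∑ i ∈ At, hatμ i := by

  -- ∑_{A*} μ* ≤ M₁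
  have h1 : (∑ i ∈ Astar, μstar i) ≤ M₁ := hM₁.2 ⟨μstar, hμ, rfl⟩
  -- M₂ attained at some μ̃ ∈ Ct⁺
  obtain ⟨μt, ⟨hμtC, hμtge⟩, hμteq⟩ := hM₂.1
  -- M₂ ≤ ∑ hatμ + Mabs
  have h2 : M₂ ≤ (∑ i ∈ At, hatμ i) + Mabs := by
    have habs : (∑ i ∈ At, |μt i - hatμ i|) ≤ Mabs := hMabs.2 ⟨μt, hμtC, rfl⟩
    have : (∑ i ∈ At, μt i) = (∑ i ∈ At, hatμ i) + ∑ i ∈ At, |μt i - hatμ i| := by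
      rw [← Finset.sum_add_distrib]
      refine Finset.sum_congr rfl fun i _ => ?_
      rw [abs_of_nonneg (by linarith [hμtge i])]; ring
    simp only [] at hμteq
    linarith [hμteq, this, habs]
  -- ∑_{At} μ* ≥ ∑ hatμ − Mabs
  have h3 : (∑ i ∈ At, hatμ i) - Mabs ≤ ∑ i ∈ At, μstar i := by
    have habs : (∑ i ∈ At, |μstar i - hatμ i|) ≤ Mabs := hMabs.2 ⟨μstar, hμ, rfl⟩
    have hle : (∑ i ∈ At, hatμ i) - (∑ i ∈ At, μstar i) ≤ ∑ i ∈ At, |μstar i - hatμ i| := by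
      rw [← Finset.sum_sub_distrib]
      refine Finset.sum_le_sum fun i _ => ?_
      have := abs_sub_abs_le_abs_sub (hatμ i) (μstar i)
      calc hatμ i - μstar i ≤ |hatμ i - μstar i| := le_abs_self _
        _ = |μstar i - hatμ i| := abs_sub_comm _ _
    linarith
  have hM₂0 : 0 ≤ M₂ - (∑ i ∈ At, hatμ i) := by
    have h := Finset.sum_le_sum (fun i (_ : i ∈ At) => hμtge i)
    simp only [] at hμteq
    linarith
  nlinarith
end
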